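/- arXiv:1810.09887 — 7 statements merged into one kernel-verified Lean document; each statement's English description precedes it below -/
import Mathlib

section
/- Let p be a 231-avoiding permutation of size N-1 and let 0 ≤ k ≤ N-1. Then there exists exactly one extension of p (insertion of the value N into one of the N possible positions) that is both 231-avoiding and k-winnable for N. -/
def IsLTRMax {N : ℕ} (p : Equiv.Perm (Fin N)) (j : Fin N) : Prop :=
  ∀ i : Fin N, i < j → p i < p j

def Winnable (N k : ℕ) (p : Equiv.Perm (Fin N)) : Prop :=
  ∃ j : Fin N, k ≤ (j : ℕ) ∧ IsLTRMax p j ∧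
    (∀ i : Fin N, k ≤ (i : ℕ) → IsLTRMax p i → j ≤ i) ∧ ((p j : ℕ) = N - 1)

/-- `p` avoids the pattern 231: there are no indices `i < j < l`
with `p l < p i < p j`. -/
def Avoids231 {N : ℕ} (p : Equiv.Perm (Fin N)) : Prop :=
  ¬ ∃ i j l : Fin N, i < j ∧ j < l ∧ p l < p i ∧ p i < p j

/-- `q` (of size `n+1`) is an extension of `p` (of size `n`): `q` is obtained by
inserting the new maximum value `n` at some position `t`; entries of `p` before
position `t` keep their positions, and the later ones are shifted right by one. -/
def IsExtension {n : ℕ} (p : Equiv.Perm (Fin n)) (q : Equiv.Perm (Fin (n + 1))) : Prop :=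
  ∃ t : Fin (n + 1), (q t : ℕ) = n ∧
    ∀ i : Fin n, (q (if (i : ℕ) < (t : ℕ) then i.castSucc else i.succ) : ℕ) = (p i : ℕ)

/-!
Inserting `n` into the gap `t` of `p` creates a 231 with `n` as the `3` exactly when some entry
left of the gap exceeds some entry right of it; so the extension avoids 231 iff `p` splits at `t`.
The inserted `n` is always a left-to-right maximum, and it is the first one from `k` on iff
`k ≤ t` and no left-to-right maximum of `p` lies in `[k, t)`. In a 231-avoider a position holds
a left-to-right maximum iff `p` splits just before it, so the admissible gap is forced to be the
least splitting gap `≥ k`, which exists because `p` splits at its end.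
-/

namespace Equiv.Perm

variable {n : ℕ}

def insertMax (p : Perm (Fin n)) (t : Fin (n + 1)) : Perm (Fin (n + 1)) :=
  (finSuccEquiv' t).trans (p.optionCongr.trans finSuccEquivLast.symm)

@[simp]
lemma insertMax_apply_self (p : Perm (Fin n)) (t : Fin (n + 1)) :
    p.insertMax t t = Fin.last n := by
  simp [insertMax]

@[simp]
lemma insertMax_apply_succAbove (p : Perm (Fin n)) (t : Fin (n + 1)) (i : Fin n) :
    p.insertMax t (t.succAbove i) = (p i).castSucc := by
  simp [insertMax]

lemma isExtension_iff_exists_insertMax_eq {p : Perm (Fin n)} {q : Perm (Fin (n + 1))} :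
    IsExtension p q ↔ ∃ t, p.insertMax t = q := by
  have hsuccAbove : ∀ (t : Fin (n + 1)) (i : Fin n),
      (if (i : ℕ) < (t : ℕ) then i.castSucc else i.succ) = t.succAbove i := by
    intro t i
    simp [Fin.succAbove, Fin.lt_def]
  simp only [IsExtension, hsuccAbove]
  refine exists_congr fun t => ⟨fun ⟨hmax, hrest⟩ => ?_, ?_⟩
  · ext s
    induction s using Fin.succAboveCases t with
    | x => simp [hmax]
    | p i => simp [hrest]
  · rintro rfl
    simp

/-- `t : Fin (n + 1)` indexes the gaps of `p`, gap `t` lying just before position `t`. -/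
def SplitsAt (p : Perm (Fin n)) (t : Fin (n + 1)) : Prop :=
  ∀ i j : Fin n, i.castSucc < t → t ≤ j.castSucc → p i < p j

lemma splitsAt_last (p : Perm (Fin n)) : p.SplitsAt (Fin.last n) :=
  fun _ j _ hj => absurd hj (Fin.castSucc_lt_last j).not_ge

lemma isLTRMax_iff_splitsAt_castSucc {p : Perm (Fin n)} (hp : Avoids231 p) {i : Fin n} :
    IsLTRMax p i ↔ p.SplitsAt i.castSucc := by
  refine ⟨fun h a j ha hj => ?_, fun h a ha => h a i (Fin.castSucc_lt_castSucc_iff.2 ha) le_rfl⟩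
  rw [Fin.castSucc_lt_castSucc_iff] at ha
  rw [Fin.castSucc_le_castSucc_iff] at hj
  rcases hj.eq_or_lt with rfl | hij
  · exact h a ha
  · by_contra hja
    exact hp ⟨a, i, j, ha, hij, (not_lt.1 hja).lt_of_ne (p.injective.ne (ha.trans hij).ne'),
      h a ha⟩

lemma splitsAt_of_avoids231_insertMax {p : Perm (Fin n)} {t : Fin (n + 1)}
    (h : Avoids231 (p.insertMax t)) : p.SplitsAt t := by
  intro i j hi hj
  by_contra hji
  have hij : i ≠ j := by
    rintro rfl
    exact (hi.trans_le hj).false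
  refine h ⟨t.succAbove i, t, t.succAbove j, (Fin.succAbove_lt_iff_castSucc_lt _ _).2 hi,
    (Fin.lt_succAbove_iff_le_castSucc _ _).2 hj, ?_, ?_⟩
  · simpa using (not_lt.1 hji).lt_of_ne (p.injective.ne hij.symm)
  · simp

lemma avoids231_insertMax {p : Perm (Fin n)} (hp : Avoids231 p) {t : Fin (n + 1)}
    (ht : p.SplitsAt t) : Avoids231 (p.insertMax t) := by
  rintro ⟨a, b, c, hab, hbc, hca, hab'⟩
  have hat : a ≠ t := by
    rintro rfl
    exact (Fin.le_last _).not_gt (by simpa using hab')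
  have hct : c ≠ t := by
    rintro rfl
    exact (Fin.le_last _).not_gt (by simpa using hca)
  obtain ⟨a, rfl⟩ := Fin.exists_succAbove_eq hat
  obtain ⟨c, rfl⟩ := Fin.exists_succAbove_eq hct
  rw [insertMax_apply_succAbove, insertMax_apply_succAbove, Fin.castSucc_lt_castSucc_iff] at hca
  by_cases hbt : b = t
  · subst hbt
    exact (ht a c ((Fin.succAbove_lt_iff_castSucc_lt _ _).1 hab)
      ((Fin.lt_succAbove_iff_le_castSucc _ _).1 hbc)).asymm hca
  · obtain ⟨b, rfl⟩ := Fin.exists_succAbove_eq hbt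
    rw [insertMax_apply_succAbove, insertMax_apply_succAbove, Fin.castSucc_lt_castSucc_iff] at hab'
    exact hp ⟨a, b, c, Fin.succAbove_lt_succAbove_iff.1 hab, Fin.succAbove_lt_succAbove_iff.1 hbc,
      hca, hab'⟩

lemma isLTRMax_insertMax_succAbove_iff {p : Perm (Fin n)} {t : Fin (n + 1)} {i : Fin n} :
    IsLTRMax (p.insertMax t) (t.succAbove i) ↔ i.castSucc < t ∧ IsLTRMax p i := by
  constructor
  · intro h
    have hit : i.castSucc < t := by
      by_contra hti
      have := h t ((Fin.lt_succAbove_iff_le_castSucc _ _).2 (not_lt.1 hti))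
      rw [insertMax_apply_self, insertMax_apply_succAbove] at this
      exact (Fin.castSucc_lt_last _).asymm this
    exact ⟨hit, fun a ha => by simpa using h (t.succAbove a) (Fin.succAbove_lt_succAbove_iff.2 ha)⟩
  · rintro ⟨hit, hi⟩ s hs
    have hst : s ≠ t := (hs.trans ((Fin.succAbove_lt_iff_castSucc_lt _ _).2 hit)).ne
    obtain ⟨a, rfl⟩ := Fin.exists_succAbove_eq hst
    simpa using hi a (Fin.succAbove_lt_succAbove_iff.1 hs)

lemma isLTRMax_insertMax_iff_of_lt {p : Perm (Fin n)} (hp : Avoids231 p) {s t : Fin (n + 1)}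
    (hst : s < t) : IsLTRMax (p.insertMax t) s ↔ p.SplitsAt s := by
  obtain ⟨i, rfl⟩ := Fin.exists_succAbove_eq hst.ne
  have hit := (Fin.succAbove_lt_iff_castSucc_lt _ _).1 hst
  rw [isLTRMax_insertMax_succAbove_iff, Fin.succAbove_of_castSucc_lt _ _ hit,
    isLTRMax_iff_splitsAt_castSucc hp, and_iff_right hit]

lemma winnable_iff_of_apply_eq_last {k : ℕ} {q : Perm (Fin (n + 1))} {m : Fin (n + 1)}
    (hm : q m = Fin.last n) :
    Winnable (n + 1) k q ↔ k ≤ m ∧ ∀ s : Fin (n + 1), k ≤ s → s < m → ¬ IsLTRMax q s := by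
  have hmax : IsLTRMax q m := fun i him => by
    rw [hm, Fin.lt_last_iff_ne_last, ← hm]
    exact q.injective.ne him.ne
  constructor
  · rintro ⟨j, hkj, -, hmin, hj⟩
    obtain rfl : j = m := q.injective (by rw [hm]; exact Fin.ext (by simpa using hj))
    exact ⟨hkj, fun s hks hsj hs => (hmin s hks hs).not_gt hsj⟩
  · rintro ⟨hkm, hmin⟩
    exact ⟨m, hkm, hmax, fun s hks hs => not_lt.1 fun hsm => hmin s hks hsm hs, by simp [hm]⟩

lemma winnable_insertMax_iff {k : ℕ} {p : Perm (Fin n)} (hp : Avoids231 p) {t : Fin (n + 1)} :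
    Winnable (n + 1) k (p.insertMax t) ↔
      k ≤ t ∧ ∀ s : Fin (n + 1), k ≤ s → s < t → ¬ p.SplitsAt s := by
  rw [winnable_iff_of_apply_eq_last (insertMax_apply_self p t)]
  exact and_congr_right fun _ => forall_congr' fun s => forall_congr' fun _ =>
    forall_congr' fun hst => not_congr (isLTRMax_insertMax_iff_of_lt hp hst)

lemma avoids231_and_winnable_insertMax_iff {k : ℕ} {p : Perm (Fin n)} (hp : Avoids231 p)
    {t : Fin (n + 1)} :
    Avoids231 (p.insertMax t) ∧ Winnable (n + 1) k (p.insertMax t) ↔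
      IsLeast {s : Fin (n + 1) | k ≤ s ∧ p.SplitsAt s} t := by
  rw [winnable_insertMax_iff hp]
  constructor
  · rintro ⟨hq, hkt, hmin⟩
    exact ⟨⟨hkt, splitsAt_of_avoids231_insertMax hq⟩,
      fun s ⟨hks, hs⟩ => not_lt.1 fun hst => hmin s hks hst hs⟩
  · rintro ⟨⟨hkt, ht⟩, hmin⟩
    exact ⟨avoids231_insertMax hp ht, hkt, fun s hks hst hs => (hmin ⟨hks, hs⟩).not_gt hst⟩

end Equiv.Perm

open Equiv.Perm in
/-- Every 231-avoiding permutation of size `n` has a unique extension to size `n+1`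
that is 231-avoiding and `k`-winnable. -/
theorem exists_unique_winnable_extension (n k : ℕ) (hk : k ≤ n)
    (p : Equiv.Perm (Fin n)) (hp : Avoids231 p) :
    ∃! q : Equiv.Perm (Fin (n + 1)),
      IsExtension p q ∧ Avoids231 q ∧ Winnable (n + 1) k q := by
  set gaps := {s : Fin (n + 1) | k ≤ s ∧ p.SplitsAt s}
  have hgaps : gaps.Nonempty := ⟨Fin.last n, by simpa using hk, splitsAt_last p⟩
  refine ⟨p.insertMax (sInf gaps), ⟨isExtension_iff_exists_insertMax_eq.2 ⟨_, rfl⟩,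
    (avoids231_and_winnable_insertMax_iff hp).2 (isLeast_csInf hgaps)⟩, ?_⟩
  rintro q ⟨hext, hq⟩
  obtain ⟨t, rfl⟩ := isExtension_iff_exists_insertMax_eq.1 hext
  rw [((avoids231_and_winnable_insertMax_iff hp).1 hq).unique (isLeast_csInf hgaps)]
end

section
/- For every N ≥ 1 and every 0 ≤ k ≤ N-1, the number of permutations of size N that are both 231-avoiding and k-winnable equals the Catalan number C_{N-1}. In particular, this count is independent of k. -/
/-!
A 231-avoiding permutation of `{0, …, n}` whose maximum `n` sits at position `m` is exactly
`u ++ n :: w` with `u` a 231-avoiding permutation of `{0, …, m - 1}` and `w` one of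
`{m, …, n - 1}`; this gives `C (n + 1) = ∑ C m * C (n - m)`. Such a permutation is `k`-winnable
iff `k ≤ m` and `u` has no left-to-right maximum at a position `≥ k`, i.e. `u` is empty or its
maximum lies among its first `k` entries. Summing over `m`, the count for `k + 1` differs from the
count for `k` by the prefixes with maximum at position exactly `k`, which contribute
`C k * C (n - k)`, minus the term `m = k`, which is also `C k * C (n - k)`. So the count does
not depend on `k`, and for `k = 0` it is `C n`.
-/

open Finset
open scoped List

namespace Avoid231

open scoped Classical

noncomputable def perms (n : ℕ) : Finset (List ℕ) := (List.range n).permutations.toFinset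

def Contains231 (l : List ℕ) : Prop := ∃ a b c : ℕ, [a, b, c] <+ l ∧ c < a ∧ a < b

noncomputable def avoiders (n : ℕ) : Finset (List ℕ) := (perms n).filter (¬ Contains231 ·)

section Perms

variable {n : ℕ} {l : List ℕ}

lemma mem_perms : l ∈ perms n ↔ l ~ List.range n := by
  simp [perms, List.mem_permutations]

lemma length_of_mem_perms (h : l ∈ perms n) : l.length = n := by
  simpa using (mem_perms.mp h).length_eq

lemma nodup_of_mem_perms (h : l ∈ perms n) : l.Nodup :=
  (mem_perms.mp h).symm.nodup List.nodup_range

lemma mem_iff_lt_of_mem_perms (h : l ∈ perms n) {x : ℕ} : x ∈ l ↔ x < n := by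
  rw [(mem_perms.mp h).mem_iff, List.mem_range]

lemma idxOf_lt_of_mem_perms (h : l ∈ perms (n + 1)) : l.idxOf n < n + 1 := by
  simpa [length_of_mem_perms h] using
    List.idxOf_lt_length_iff.mpr ((mem_iff_lt_of_mem_perms h).2 n.lt_succ_self)

lemma mem_avoiders : l ∈ avoiders n ↔ l ∈ perms n ∧ ¬ Contains231 l := by
  simp [avoiders]

lemma avoiders_zero : avoiders 0 = {[]} := by
  simp [avoiders, perms, Contains231, filter_singleton]

end Perms

lemma Contains231.mono {l l' : List ℕ} (hp : Contains231 l) (h : l <+ l') : Contains231 l' :=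
  let ⟨a, b, c, hs, h1, h2⟩ := hp
  ⟨a, b, c, hs.trans h, h1, h2⟩

lemma contains231_map_add_iff {c : ℕ} {l : List ℕ} :
    Contains231 (l.map (c + ·)) ↔ Contains231 l := by
  constructor
  · rintro ⟨a, b, d, hs, h1, h2⟩
    obtain ⟨l', hl', he⟩ := List.sublist_map_iff.mp hs
    rcases l' with _ | ⟨a', _ | ⟨b', _ | ⟨d', _ | _⟩⟩⟩ <;> simp at he
    obtain ⟨rfl, rfl, rfl⟩ := he
    exact ⟨a', b', d', hl', by omega, by omega⟩
  · rintro ⟨a, b, d, hs, h1, h2⟩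
    exact ⟨c + a, c + b, c + d, by simpa using hs.map (c + ·), by omega, by omega⟩

lemma not_contains231_append_cons {u w : List ℕ} {M : ℕ} (hu : ¬ Contains231 u)
    (hw : ¬ Contains231 w) (hlt : ∀ x ∈ u, ∀ y ∈ M :: w, x < y)
    (hwM : ∀ y ∈ w, y < M) : ¬ Contains231 (u ++ M :: w) := by
  rintro ⟨a, b, c, hs, hca, hab⟩
  obtain ⟨s₁, s₂, heq, hs₁, hs₂⟩ := List.sublist_append_iff.mp hs
  rcases s₁ with _ | ⟨x, _ | ⟨y, _ | ⟨z, _ | ⟨_, _⟩⟩⟩⟩ <;> simp at heq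
  · subst heq
    rcases List.sublist_cons_iff.mp hs₂ with h | ⟨r, hr, hrw⟩
    · exact hw ⟨a, b, c, h, hca, hab⟩
    · obtain ⟨rfl, rfl⟩ := List.cons_eq_cons.mp hr
      exact absurd (hwM b (hrw.subset (by simp))) (by omega)
  · obtain ⟨rfl, rfl⟩ := heq
    exact absurd (hlt a (hs₁.subset (by simp)) c (hs₂.subset (by simp))) (by omega)
  · obtain ⟨rfl, rfl, rfl⟩ := heq
    exact absurd (hlt a (hs₁.subset (by simp)) c (hs₂.subset (by simp))) (by omega)
  · obtain ⟨rfl, rfl, rfl, -⟩ := heq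
    exact hu ⟨a, b, c, hs₁, hca, hab⟩

lemma lt_of_not_contains231_append_cons {u w : List ℕ} {M x y : ℕ}
    (h : ¬ Contains231 (u ++ M :: w)) (hx : x ∈ u) (hy : y ∈ w) (hxM : x < M) (hxy : x ≠ y) :
    x < y := by
  by_contra hyx
  exact h ⟨x, M, y, (List.singleton_sublist.mpr hx).append
    ((List.singleton_sublist.mpr hy).cons_cons M), by omega, hxM⟩

lemma perm_range_of_perm_append {s t : List ℕ} {a b : ℕ} (h : s ++ t ~ List.range (a + b))
    (hs : s.length = a) (hlt : ∀ x ∈ s, ∀ y ∈ t, x < y) :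
    s ~ List.range a ∧ t ~ (List.range b).map (a + ·) := by
  have hnd : (s ++ t).Nodup := h.nodup_iff.mpr List.nodup_range
  have hbound : ∀ x ∈ s ++ t, x < a + b := fun x hx => List.mem_range.mp (h.subset hx)
  have ht : t.length = b := by simpa [hs] using h.length_eq
  -- the `b` entries of `t` are distinct and lie strictly between `x` and `a + b`
  have hsa : ∀ x ∈ s, x < a := by
    intro x hx
    have hsub : t.toFinset ⊆ Ioo x (a + b) := fun y hy => by
      rw [List.mem_toFinset] at hy
      exact mem_Ioo.mpr ⟨hlt x hx y hy, hbound y (List.mem_append_right s hy)⟩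
    have := card_le_card hsub
    rw [List.toFinset_card_of_nodup hnd.of_append_right, ht, Nat.card_Ioo] at this
    have := hbound x (List.mem_append_left t hx)
    omega
  have hsp : s ~ List.range a :=
    (List.subperm_of_subset hnd.of_append_left fun x hx => List.mem_range.mpr (hsa x hx))
      |>.perm_of_length_le (by simp [hs])
  refine ⟨hsp, (List.perm_append_left_iff s).mp (h.trans ?_)⟩
  rw [List.range_add]
  exact hsp.symm.append_right _

def join (u v : List ℕ) : List ℕ := u ++ (u.length + v.length) :: v.map (u.length + ·)

lemma take_join (u v : List ℕ) : (join u v).take u.length = u :=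
  List.take_left' rfl

lemma idxOf_join {u v : List ℕ} (h : u.length + v.length ∉ u) :
    (join u v).idxOf (u.length + v.length) = u.length := by
  rw [join, List.idxOf_append_of_notMem h, List.idxOf_cons_self, add_zero]

lemma join_injective_of_length_eq {u u' v v' : List ℕ} (hu : u.length = u'.length)
    (h : join u v = join u' v') : u = u' ∧ v = v' := by
  obtain rfl : u = u' := by rw [← take_join u v, ← take_join u' v', h, hu]
  simp only [join, List.append_cancel_left_eq, List.cons.injEq] at h
  exact ⟨rfl, List.map_injective_iff.mpr (add_right_injective _) h.2⟩

lemma join_mem_avoiders {m n : ℕ} {u v : List ℕ} (hu : u ∈ avoiders m)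
    (hv : v ∈ avoiders n) : join u v ∈ avoiders (m + n + 1) := by
  rw [mem_avoiders] at hu hv ⊢
  have hum : u.length = m := length_of_mem_perms hu.1
  have hvn : v.length = n := length_of_mem_perms hv.1
  simp only [join, hum, hvn]
  refine ⟨mem_perms.mpr ?_, not_contains231_append_cons hu.2
    (fun h => hv.2 (contains231_map_add_iff.mp h)) ?_ ?_⟩
  · calc u ++ (m + n) :: v.map (m + ·) ~ (m + n) :: (u ++ v.map (m + ·)) := List.perm_middle
      _ ~ (m + n) :: List.range (m + n) := by
        rw [List.range_add]
        exact ((mem_perms.mp hu.1).append ((mem_perms.mp hv.1).map _)).cons _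
      _ ~ List.range (m + n + 1) := by
        rw [List.range_succ]
        exact (List.perm_append_singleton _ _).symm
  · intro x hx y hy
    have := (mem_iff_lt_of_mem_perms hu.1).mp hx
    simp only [List.mem_cons, List.mem_map] at hy
    obtain rfl | ⟨z, -, rfl⟩ := hy <;> omega
  · simp only [List.mem_map]
    rintro _ ⟨z, hz, rfl⟩
    have := (mem_iff_lt_of_mem_perms hv.1).mp hz
    omega

lemma exists_join_eq {n : ℕ} {l : List ℕ} (hl : l ∈ avoiders (n + 1)) :
    ∃ u ∈ avoiders (l.idxOf n), ∃ v ∈ avoiders (n - l.idxOf n), join u v = l := by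
  obtain ⟨hperm, hav⟩ := mem_avoiders.mp hl
  obtain ⟨u, w, rfl⟩ := List.append_of_mem ((mem_iff_lt_of_mem_perms hperm).mpr n.lt_succ_self)
  have hnd := nodup_of_mem_perms hperm
  have hnu : n ∉ u := fun h => List.disjoint_of_nodup_append hnd h List.mem_cons_self
  have hlt : ∀ x ∈ u, ∀ y ∈ w, x < y := fun x hx y hy => by
    have := (mem_iff_lt_of_mem_perms hperm).mp (List.mem_append_left _ hx)
    refine lt_of_not_contains231_append_cons hav hx hy
      (lt_of_le_of_ne (Nat.lt_succ_iff.mp this) fun h => hnu (h ▸ hx)) fun h => ?_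
    exact List.disjoint_of_nodup_append hnd hx (h ▸ List.mem_cons_of_mem _ hy)
  set m := u.length
  have hm : m ≤ n := by
    have := idxOf_lt_of_mem_perms hperm
    rw [List.idxOf_append_of_notMem hnu, List.idxOf_cons_self] at this
    omega
  have huw : u ++ w ~ List.range (m + (n - m)) := by
    rw [Nat.add_sub_cancel' hm]
    refine (List.perm_cons n).mp (List.perm_middle.symm.trans ((mem_perms.mp hperm).trans ?_))
    rw [List.range_succ]
    exact List.perm_append_singleton _ _
  obtain ⟨hu, hw⟩ := perm_range_of_perm_append huw rfl hlt
  have hw' : (w.map (· - m)).map (m + ·) = w := by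
    rw [List.map_map]
    refine (List.map_congr_left fun y hy => ?_).trans (List.map_id w)
    obtain ⟨z, -, rfl⟩ := List.mem_map.mp (hw.subset hy)
    simp
  have hwn : m + w.length = n := by simpa [m, hm] using huw.length_eq
  rw [List.idxOf_append_of_notMem hnu, List.idxOf_cons_self, add_zero]
  have hu' : u ∈ avoiders m :=
    mem_avoiders.mpr ⟨mem_perms.mpr hu, fun h => hav (h.mono (List.sublist_append_left _ _))⟩
  refine ⟨u, hu', w.map (· - m), mem_avoiders.mpr ⟨mem_perms.mpr ?_, fun h => hav ?_⟩, ?_⟩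
  · simpa [Function.comp_def] using hw.map (· - m)
  · rw [← contains231_map_add_iff, hw'] at h
    exact h.mono ((List.sublist_cons_self n w).trans (List.sublist_append_right u _))
  · rw [join, hw', List.length_map, hwn]

lemma card_filter_idxOf_eq {n m : ℕ} (hm : m ≤ n) (P : List ℕ → Prop) [DecidablePred P] :
    #{l ∈ avoiders (n + 1) | l.idxOf n = m ∧ P (l.take m)} =
      #{u ∈ avoiders m | P u} * #(avoiders (n - m)) := by
  rw [← card_product, ← card_image_of_injOn (f := fun x : List ℕ × List ℕ => join x.1 x.2)]
  · congr 1
    ext l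
    simp only [mem_image, mem_product, mem_filter, Prod.exists]
    constructor
    · rintro ⟨hl, rfl, hP⟩
      obtain ⟨u, hu, v, hv, rfl⟩ := exists_join_eq hl
      rw [← length_of_mem_perms (mem_avoiders.mp hu).1, take_join] at hP
      exact ⟨u, v, ⟨⟨hu, hP⟩, hv⟩, rfl⟩
    · rintro ⟨u, v, ⟨⟨hu, hP⟩, hv⟩, rfl⟩
      have hum := length_of_mem_perms (mem_avoiders.mp hu).1
      have hlen : u.length + v.length = n := by
        rw [hum, length_of_mem_perms (mem_avoiders.mp hv).1, Nat.add_sub_cancel' hm]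
      have hnu : n ∉ u := fun h => by
        have := (mem_iff_lt_of_mem_perms (mem_avoiders.mp hu).1).mp h
        omega
      refine ⟨by simpa [Nat.add_sub_cancel' hm] using join_mem_avoiders hu hv, ?_, ?_⟩
      · rw [← hlen, idxOf_join (hlen ▸ hnu), hum]
      · rwa [← hum, take_join]
  · rintro ⟨u, v⟩ huv ⟨u', v'⟩ huv' h
    simp only [coe_product, Set.mem_prod, mem_coe, mem_filter] at huv huv'
    have hu := length_of_mem_perms (mem_avoiders.mp huv.1.1).1
    have hu' := length_of_mem_perms (mem_avoiders.mp huv'.1.1).1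
    obtain ⟨rfl, rfl⟩ := join_injective_of_length_eq (hu.trans hu'.symm) h
    rfl

lemma card_filter_idxOf_mem {n : ℕ} {s : Finset ℕ} (hs : s ⊆ range (n + 1))
    (P : List ℕ → Prop) [DecidablePred P] :
    #{l ∈ avoiders (n + 1) | l.idxOf n ∈ s ∧ P (l.take (l.idxOf n))} =
      ∑ m ∈ s, #{u ∈ avoiders m | P u} * #(avoiders (n - m)) := by
  rw [card_eq_sum_card_fiberwise (f := fun l => l.idxOf n) (t := s)
    fun l hl => (mem_filter.mp hl).2.1]
  refine sum_congr rfl fun m hm => ?_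
  rw [← card_filter_idxOf_eq (Nat.lt_succ_iff.mp (mem_range.mp (hs hm))), filter_filter]
  congr 1
  refine filter_congr fun l _ => ⟨fun ⟨⟨_, hP⟩, h⟩ => ⟨h, h ▸ hP⟩, ?_⟩
  rintro ⟨h, hP⟩
  exact ⟨⟨h ▸ hm, h ▸ hP⟩, h⟩

lemma catalan_succ_eq_sum_range (n : ℕ) :
    catalan (n + 1) = ∑ i ∈ range (n + 1), catalan i * catalan (n - i) := by
  rw [catalan_succ, Fin.sum_univ_eq_sum_range (fun i => catalan i * catalan (n - i))]

theorem card_avoiders (n : ℕ) : #(avoiders n) = catalan n := by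
  induction n using Nat.strong_induction_on with
  | _ n ih =>
    rcases n with _ | n
    · simp [avoiders_zero]
    · have h := card_filter_idxOf_mem (n := n) subset_rfl fun _ => True
      rw [filter_true_of_mem fun l hl =>
        ⟨mem_range.mpr (idxOf_lt_of_mem_perms (mem_avoiders.mp hl).1), trivial⟩] at h
      rw [h, catalan_succ_eq_sum_range]
      refine sum_congr rfl fun m hm => ?_
      have := mem_range.mp hm
      rw [filter_true, ih m (by omega), ih (n - m) (by omega)]

def LTRMaxAt (l : List ℕ) (j : ℕ) : Prop := j < l.length ∧ ∀ i < j, l.getD i 0 < l.getD j 0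

def NoLTRMaxFrom (k : ℕ) (l : List ℕ) : Prop := ∀ i, k ≤ i → ¬ LTRMaxAt l i

lemma ltrMaxAt_take_iff {l : List ℕ} {m i : ℕ} :
    LTRMaxAt (l.take m) i ↔ i < m ∧ LTRMaxAt l i := by
  simp only [LTRMaxAt, List.length_take, lt_min_iff, List.getD_eq_getElem?_getD,
    List.getElem?_take]
  constructor
  · rintro ⟨⟨him, hil⟩, h⟩
    refine ⟨him, hil, fun j hj => ?_⟩
    simpa [hj.trans him, him] using h j hj
  · rintro ⟨him, hil, h⟩
    refine ⟨⟨him, hil⟩, fun j hj => ?_⟩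
    simpa [hj.trans him, him] using h j hj

lemma noLTRMaxFrom_iff_idxOf_lt {m k : ℕ} {u : List ℕ} (hu : u ∈ perms (m + 1)) :
    NoLTRMaxFrom k u ↔ u.idxOf m < k := by
  have hlen := length_of_mem_perms hu
  have hj : u.idxOf m < m + 1 := idxOf_lt_of_mem_perms hu
  have hjm : u.getD (u.idxOf m) 0 = m := by
    rw [List.getD_eq_getElem _ _ (by omega), List.getElem_idxOf]
  have hother : ∀ i < m + 1, i ≠ u.idxOf m → u.getD i 0 < m := fun i hi hne => by
    rw [List.getD_eq_getElem _ _ (by omega)]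
    have hlt := (mem_iff_lt_of_mem_perms hu).mp (List.getElem_mem (l := u) (n := i) (by omega))
    have hne' : u[i] ≠ m := fun h => hne (by rw [← h, (nodup_of_mem_perms hu).idxOf_getElem])
    omega
  constructor
  · intro h
    by_contra hk
    refine h _ (not_lt.mp hk) ⟨by omega, fun i hi => ?_⟩
    rw [hjm]
    exact hother i (by omega) (by omega)
  · rintro hk i hki ⟨hi, hmax⟩
    have := hmax _ (hk.trans_le hki)
    have := hother i (by omega) (by omega)
    omega

/-- The number of 231-avoiding permutations of `{0, …, m - 1}` that are empty or have their
maximum among the first `k` entries. -/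
def prefixCatalan (k : ℕ) : ℕ → ℕ
  | 0 => 1
  | m + 1 => ∑ j ∈ range (min k (m + 1)), catalan j * catalan (m - j)

lemma card_filter_noLTRMaxFrom (k m : ℕ) :
    #{u ∈ avoiders m | NoLTRMaxFrom k u} = prefixCatalan k m := by
  rcases m with _ | m
  · simp [prefixCatalan, avoiders_zero, filter_singleton, NoLTRMaxFrom, LTRMaxAt]
  · have hs : range (min k (m + 1)) ⊆ range (m + 1) := range_subset_range.mpr (min_le_right _ _)
    rw [prefixCatalan, filter_congr (q := fun u => u.idxOf m ∈ range (min k (m + 1)) ∧ True),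
      card_filter_idxOf_mem hs fun _ => True]
    · refine sum_congr rfl fun j hj => ?_
      rw [filter_true, card_avoiders, card_avoiders]
    · intro u hu
      have := idxOf_lt_of_mem_perms (mem_avoiders.mp hu).1
      rw [noLTRMaxFrom_iff_idxOf_lt (mem_avoiders.mp hu).1, mem_range, lt_min_iff]
      tauto

lemma prefixCatalan_self (k : ℕ) : prefixCatalan k k = catalan k := by
  rcases k with _ | k
  · rw [prefixCatalan, catalan_zero]
  · rw [prefixCatalan, min_self, catalan_succ_eq_sum_range]

lemma prefixCatalan_succ_succ {k m : ℕ} (h : k ≤ m) :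
    prefixCatalan (k + 1) (m + 1) = prefixCatalan k (m + 1) + catalan k * catalan (m - k) := by
  simp only [prefixCatalan, min_eq_left (Nat.succ_le_succ h), min_eq_left (h.trans m.le_succ),
    sum_range_succ]

lemma sum_Ico_catalan_mul_catalan {k n : ℕ} (h : k < n) :
    ∑ m ∈ Ico (k + 1) (n + 1), catalan (m - 1 - k) * catalan (n - m) = catalan (n - k) := by
  obtain ⟨d, rfl⟩ : ∃ d, n = k + 1 + d := ⟨n - (k + 1), by omega⟩
  rw [sum_Ico_eq_sum_range, show k + 1 + d - k = d + 1 by omega, catalan_succ_eq_sum_range]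
  refine sum_congr (by congr 1; omega) fun t _ => ?_
  congr 2 <;> omega

theorem sum_prefixCatalan_mul_catalan {k n : ℕ} (hk : k ≤ n) :
    ∑ m ∈ Ico k (n + 1), prefixCatalan k m * catalan (n - m) = catalan n := by
  induction k with
  | zero =>
    rw [← range_eq_Ico, sum_range_succ']
    simp [prefixCatalan]
  | succ k ih =>
    have hsplit : ∀ m ∈ Ico (k + 1) (n + 1), prefixCatalan (k + 1) m * catalan (n - m) =
        prefixCatalan k m * catalan (n - m) +
          catalan k * (catalan (m - 1 - k) * catalan (n - m)) := by
      intro m hm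
      obtain ⟨m, rfl⟩ : ∃ m', m = m' + 1 := ⟨m - 1, by grind⟩
      rw [prefixCatalan_succ_succ (by grind), Nat.add_sub_cancel]
      ring
    have hlow := ih (by omega)
    rw [sum_eq_sum_Ico_succ_bot (by omega), prefixCatalan_self] at hlow
    rw [sum_congr rfl hsplit, sum_add_distrib, ← mul_sum, sum_Ico_catalan_mul_catalan hk]
    omega

section Perm

variable {N : ℕ}

def toList (p : Equiv.Perm (Fin N)) : List ℕ := List.ofFn fun i => (p i : ℕ)

lemma toList_injective : Function.Injective (toList (N := N)) := fun _ _ h =>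
  Equiv.ext fun i => Fin.ext (congrFun (List.ofFn_injective h) i)

lemma toList_mem_perms (p : Equiv.Perm (Fin N)) : toList p ∈ perms N := by
  rw [mem_perms, ← List.map_coe_finRange_eq_range, ← List.ofFn_eq_map]
  exact Equiv.Perm.ofFn_comp_perm p Fin.val

lemma exists_toList_eq {l : List ℕ} (hl : l ∈ perms N) :
    ∃ p : Equiv.Perm (Fin N), toList p = l := by
  have hlen := length_of_mem_perms hl
  let f : Fin N → Fin N := fun i =>
    ⟨l[(i : ℕ)], (mem_iff_lt_of_mem_perms hl).mp (List.getElem_mem _)⟩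
  have hf : Function.Injective f := fun i j h =>
    Fin.ext ((nodup_of_mem_perms hl).getElem_inj_iff.mp (Fin.val_eq_of_eq h))
  refine ⟨Equiv.ofBijective f (Finite.injective_iff_bijective.mp hf),
    List.ext_getElem (by simp [toList, hlen]) fun i _ _ => ?_⟩
  simp [toList, f]

lemma card_subtype_eq_card_filter_perms (Q : Equiv.Perm (Fin N) → Prop) (R : List ℕ → Prop)
    (h : ∀ p, Q p ↔ R (toList p)) : Nat.card {p // Q p} = #{l ∈ perms N | R l} := by
  rw [Nat.card_eq_fintype_card, Fintype.card_subtype,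
    ← card_image_of_injective _ toList_injective]
  congr 1
  ext l
  simp only [mem_image, mem_filter, mem_univ, true_and]
  constructor
  · rintro ⟨p, hp, rfl⟩
    exact ⟨toList_mem_perms p, (h p).mp hp⟩
  · rintro ⟨hl, hR⟩
    obtain ⟨p, rfl⟩ := exists_toList_eq hl
    exact ⟨p, (h p).mpr hR, rfl⟩

lemma avoids231_iff (p : Equiv.Perm (Fin N)) : Avoids231 p ↔ ¬ Contains231 (toList p) := by
  rw [Avoids231, toList, List.ofFn_eq_map, Contains231]
  refine not_congr ⟨fun ⟨i, j, l, hij, hjl, hli, hij'⟩ => ⟨p i, p j, p l, ?_, hli, hij'⟩,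
    ?_⟩
  · have hsub : [i, j, l] <+ List.finRange N :=
      List.sublist_of_subperm_of_pairwise
        (List.subperm_of_subset (by simp [hij.ne, hjl.ne, (hij.trans hjl).ne]) (by simp))
        (by simp [hij, hjl, hij.trans hjl]) (List.pairwise_lt_finRange N)
    simpa using hsub.map (fun i => (p i : ℕ))
  · rintro ⟨a, b, c, hs, hca, hab⟩
    obtain ⟨s, hsub, he⟩ := List.sublist_map_iff.mp hs
    rcases s with _ | ⟨i, _ | ⟨j, _ | ⟨l, _ | _⟩⟩⟩ <;> simp at he
    obtain ⟨rfl, rfl, rfl⟩ := he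
    have hlt := (List.pairwise_lt_finRange N).sublist hsub
    simp only [List.pairwise_cons, List.mem_cons] at hlt
    exact ⟨i, j, l, hlt.1 j (by simp), hlt.2.1 l (by simp), hca, hab⟩

lemma getD_toList (p : Equiv.Perm (Fin N)) {i : ℕ} (hi : i < N) :
    (toList p).getD i 0 = p ⟨i, hi⟩ := by
  simp [toList, List.getD_eq_getElem?_getD, hi]

lemma ltrMaxAt_toList_iff (p : Equiv.Perm (Fin N)) (j : Fin N) :
    LTRMaxAt (toList p) j ↔ IsLTRMax p j := by
  simp only [LTRMaxAt, IsLTRMax, Fin.forall_iff, Fin.lt_def]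
  constructor
  · rintro ⟨-, h⟩ i hi hij
    have := h i hij
    rwa [getD_toList p hi, getD_toList p j.isLt] at this
  · intro h
    refine ⟨by simp [toList], fun i hij => ?_⟩
    rw [getD_toList p (hij.trans j.isLt), getD_toList p j.isLt]
    exact h i _ hij

end Perm

section Winnable

variable {n k : ℕ}

lemma winnable_iff (p : Equiv.Perm (Fin (n + 1))) :
    Winnable (n + 1) k p ↔ k ≤ (p.symm (Fin.last n) : ℕ) ∧
      ∀ i : Fin (n + 1), k ≤ (i : ℕ) → i < p.symm (Fin.last n) → ¬ IsLTRMax p i := by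
  constructor
  · rintro ⟨j, hkj, -, hmin, hval⟩
    obtain rfl : j = p.symm (Fin.last n) := p.eq_symm_apply.mpr (Fin.ext (by simpa using hval))
    exact ⟨hkj, fun i hki hij hi => (hmin i hki hi).not_gt hij⟩
  · rintro ⟨hk, hno⟩
    refine ⟨_, hk, fun i hi => ?_, fun i hki hi => not_lt.mp fun hij => hno i hki hij hi,
      by simp⟩
    rw [Equiv.apply_symm_apply, Fin.lt_last_iff_ne_last]
    exact fun h => hi.ne (p.eq_symm_apply.mpr h)

lemma idxOf_toList (p : Equiv.Perm (Fin (n + 1))) :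
    (toList p).idxOf n = p.symm (Fin.last n) := by
  have h := (nodup_of_mem_perms (toList_mem_perms p)).idxOf_getElem (i := p.symm (Fin.last n))
    (by simpa [toList] using Fin.is_le _)
  simpa only [toList, List.getElem_ofFn, Fin.eta, Equiv.apply_symm_apply, Fin.val_last] using h

lemma winnable_iff_toList (p : Equiv.Perm (Fin (n + 1))) :
    Winnable (n + 1) k p ↔
      k ≤ (toList p).idxOf n ∧ NoLTRMaxFrom k ((toList p).take ((toList p).idxOf n)) := by
  rw [winnable_iff, idxOf_toList]
  refine and_congr_right fun _ => ⟨fun h i hki hi => ?_, fun h i hki hij hi => ?_⟩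
  · obtain ⟨hij, hi⟩ := ltrMaxAt_take_iff.mp hi
    have hin : i < n + 1 := by simpa [toList] using hi.1
    exact h ⟨i, hin⟩ hki hij ((ltrMaxAt_toList_iff p ⟨i, hin⟩).mp hi)
  · exact h i hki (ltrMaxAt_take_iff.mpr ⟨hij, (ltrMaxAt_toList_iff p i).mpr hi⟩)

end Winnable

end Avoid231

open Avoid231

/-- For every `N ≥ 1` and `0 ≤ k ≤ N-1`, the number of permutations of size `N`
that are 231-avoiding and `k`-winnable equals the Catalan number `C_{N-1}`
(independently of `k`). -/
theorem card_avoids231_winnable (N k : ℕ) (hN : 1 ≤ N) (hk : k ≤ N - 1) :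
    Nat.card {p : Equiv.Perm (Fin N) // Avoids231 p ∧ Winnable N k p} =
      catalan (N - 1) := by
  obtain ⟨n, rfl⟩ := Nat.exists_eq_add_of_le' hN
  rw [Nat.add_sub_cancel] at hk ⊢
  classical
  calc _ = #{l ∈ avoiders (n + 1) |
          l.idxOf n ∈ Ico k (n + 1) ∧ NoLTRMaxFrom k (l.take (l.idxOf n))} := by
        rw [card_subtype_eq_card_filter_perms _
          (fun l => ¬ Contains231 l ∧ l.idxOf n ∈ Ico k (n + 1) ∧
            NoLTRMaxFrom k (l.take (l.idxOf n))) fun p => by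
              have := idxOf_lt_of_mem_perms (toList_mem_perms p)
              rw [avoids231_iff, winnable_iff_toList, mem_Ico]
              tauto]
        congr 1
        ext l
        simp [mem_avoiders, and_assoc]
    _ = ∑ m ∈ Ico k (n + 1), prefixCatalan k m * catalan (n - m) := by
        rw [card_filter_idxOf_mem fun m hm => mem_range.mpr (mem_Ico.mp hm).2]
        simp_rw [card_filter_noLTRMaxFrom, card_avoiders]
    _ = catalan n := sum_prefixCatalan_mul_catalan hk
end

section
/- The sets of (position, value) pairs of left-to-right maxima arising from permutations of size N are in bijection with the sets of northeast corners of Dyck paths of size N. -/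
/-- The set of (position, value) pairs (1-indexed) of left-to-right maxima of `p`. -/
def ltrData {N : ℕ} (p : Equiv.Perm (Fin N)) : Set (ℕ × ℕ) :=
  {x | ∃ j : Fin N, IsLTRMax p j ∧ x = ((j : ℕ) + 1, (p j : ℕ) + 1)}

/-- Every prefix of the step word (`true` = north, `false` = east) has at least as
many north steps as east steps: the path stays weakly above `y = x`. -/
def IsPrefixDyck (w : List Bool) : Prop :=
  ∀ t : ℕ, (w.take t).count false ≤ (w.take t).count true

/-- `w` is (the step word of) a Dyck path of size `N`: a north/east lattice path
from `(0,0)` to `(N,N)` staying weakly above `y = x`. -/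
def IsDyck (N : ℕ) (w : List Bool) : Prop :=
  w.length = 2 * N ∧ w.count false = N ∧ IsPrefixDyck w

/-- The set of northeast corners of the path `w`: pairs `(column, height)` at the
end of the east step of each north step immediately followed by an east step. -/
def neCorners (w : List Bool) : Set (ℕ × ℕ) :=
  {x | ∃ t : ℕ, w[t]? = some true ∧ w[t + 1]? = some false ∧
    x = ((w.take (t + 2)).count false, (w.take (t + 2)).count true)}

/-!
Both kinds of sets are the jump sets `{(i + 1, M (i + 1)) | M i < M (i + 1)}` of *profiles*:
weakly increasing `M : ℕ → ℕ` with `M 0 = 0`, `i ≤ M i` for `i ≤ N` and `M N = N`. For a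
permutation, `M i` is the largest of its first `i` values (counted from 1), and the left-to-right
maxima are the positions where this running maximum jumps. For a Dyck path, `M (i + 1)` is the
height of its `(i + 1)`-st east step, and the northeast corners are the east steps that rise
above the previous one. Conversely every profile comes from a Dyck path, built block by block,
and from a permutation: put `M (i + 1) - 1` at each jump `i` and fill the remaining positions
with the remaining values in increasing order; a count shows that `i ≤ M i` keeps each filled
value below the running maximum.
-/

def runMax (q : ℕ → ℕ) : ℕ → ℕ
  | 0 => 0
  | n + 1 => max (runMax q n) (q n)

def jumpSet (M : ℕ → ℕ) (N : ℕ) : Set (ℕ × ℕ) :=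
  {x | ∃ i < N, M i < M (i + 1) ∧ x = (i + 1, M (i + 1))}

structure IsDyckProfile (N : ℕ) (M : ℕ → ℕ) : Prop where
  zero : M 0 = 0
  mono : Monotone M
  self_le : ∀ i ≤ N, i ≤ M i
  top : M N = N

section runMax

variable {q : ℕ → ℕ} {n : ℕ}

theorem runMax_lt_iff {b : ℕ} : runMax q n < b ↔ 0 < b ∧ ∀ i < n, q i < b := by
  induction n with
  | zero => simp [runMax]
  | succ n ih => simp only [runMax, max_lt_iff, ih, Nat.forall_lt_succ_right, and_assoc]

theorem le_runMax {i : ℕ} (h : i < n) : q i ≤ runMax q n :=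
  Nat.lt_succ_iff.mp ((runMax_lt_iff.mp (Nat.lt_succ_self _)).2 i h)

theorem runMax_mono : Monotone (runMax q) :=
  monotone_nat_of_le_succ fun _ => le_max_left _ _

theorem le_runMax_of_injOn (hinj : Set.InjOn q (Set.Iio n)) (hpos : ∀ i < n, 0 < q i) :
    n ≤ runMax q n := by
  have hmaps : Set.MapsTo q (Finset.range n) (Finset.Icc 1 (runMax q n)) := fun i hi => by
    rw [Finset.coe_range] at hi
    exact Finset.mem_Icc.mpr ⟨hpos i hi, le_runMax hi⟩
  simpa using Finset.card_le_card_of_injOn q hmaps (by rwa [Finset.coe_range])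

theorem runMax_eq_of_forall_succ {M : ℕ → ℕ} (h0 : M 0 = 0)
    (h : ∀ i < n, M (i + 1) = max (M i) (q i)) : ∀ i ≤ n, runMax q i = M i := by
  intro i hi
  induction i with
  | zero => exact h0.symm
  | succ i ih => rw [runMax, ih (by omega), h i (by omega)]

end runMax

theorem jumpSet_congr {M M' : ℕ → ℕ} {N : ℕ} (h : ∀ i ≤ N, M i = M' i) :
    jumpSet M N = jumpSet M' N := by
  ext x
  refine exists_congr fun i => and_congr_right fun hi => ?_
  rw [h i hi.le, h (i + 1) hi]

section valueSeq

variable {N : ℕ}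

def valueSeq (p : Equiv.Perm (Fin N)) (j : ℕ) : ℕ :=
  if h : j < N then (p ⟨j, h⟩ : ℕ) + 1 else 0

theorem valueSeq_coe (p : Equiv.Perm (Fin N)) (j : Fin N) : valueSeq p j = (p j : ℕ) + 1 := by
  simp [valueSeq]

theorem isLTRMax_iff_runMax_lt (p : Equiv.Perm (Fin N)) (j : Fin N) :
    IsLTRMax p j ↔ runMax (valueSeq p) j < valueSeq p j := by
  rw [runMax_lt_iff, valueSeq_coe]
  refine ⟨fun h => ⟨Nat.succ_pos _, fun i hi => ?_⟩, fun h i hi => ?_⟩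
  · have := h ⟨i, hi.trans j.isLt⟩ hi
    rw [valueSeq_coe p ⟨i, hi.trans j.isLt⟩]
    omega
  · have := h.2 i hi
    rw [valueSeq_coe] at this
    omega

theorem ltrData_eq_jumpSet (p : Equiv.Perm (Fin N)) :
    ltrData p = jumpSet (runMax (valueSeq p)) N := by
  ext x
  constructor
  · rintro ⟨j, hj, rfl⟩
    rw [isLTRMax_iff_runMax_lt] at hj
    refine ⟨j, j.isLt, lt_max_of_lt_right hj, ?_⟩
    rw [runMax, max_eq_right hj.le, valueSeq_coe]
  · rintro ⟨i, hi, hjump, rfl⟩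
    have hlt : runMax (valueSeq p) i < valueSeq p i := by
      simpa [runMax] using hjump
    refine ⟨⟨i, hi⟩, (isLTRMax_iff_runMax_lt p ⟨i, hi⟩).mpr hlt, ?_⟩
    rw [runMax, max_eq_right hlt.le, valueSeq_coe p ⟨i, hi⟩]

theorem valueSeq_injOn (p : Equiv.Perm (Fin N)) : Set.InjOn (valueSeq p) (Set.Iio N) := by
  intro i hi j hj h
  have := p.injective (Fin.ext (by simpa [valueSeq, hi.out, hj.out] using h))
  simpa using this

theorem isDyckProfile_runMax_valueSeq (p : Equiv.Perm (Fin N)) :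
    IsDyckProfile N (runMax (valueSeq p)) := by
  have hle : ∀ i ≤ N, i ≤ runMax (valueSeq p) i := fun i hi =>
    le_runMax_of_injOn ((valueSeq_injOn p).mono (Set.Iio_subset_Iio hi))
      fun j hj => by simp [valueSeq, show j < N by omega]
  refine ⟨rfl, runMax_mono, hle, le_antisymm ?_ (hle N le_rfl)⟩
  refine Nat.lt_succ_iff.mp (runMax_lt_iff.mpr ⟨N.succ_pos, fun j hj => ?_⟩)
  rw [valueSeq_coe p ⟨j, hj⟩]
  exact Nat.succ_lt_succ (p _).isLt

theorem exists_perm_valueSeq {f : ℕ → ℕ} (hf : ∀ j < N, f j < N)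
    (hinj : Set.InjOn f (Set.Iio N)) :
    ∃ p : Equiv.Perm (Fin N), ∀ j < N, valueSeq p j = f j + 1 := by
  let g : Fin N → Fin N := fun j => ⟨f j, hf j j.isLt⟩
  have hg : Function.Injective g := fun i j h =>
    Fin.ext (hinj i.isLt j.isLt (congrArg Fin.val h))
  exact ⟨Equiv.ofBijective g (Finite.injective_iff_bijective.mp hg), fun j hj => by
    simp [valueSeq, hj, g]⟩

end valueSeq

theorem Nat.count_add_count_not (p : ℕ → Prop) [DecidablePred p] (n : ℕ) :
    Nat.count p n + Nat.count (fun k => ¬ p k) n = n := by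
  simp only [Nat.count_eq_card_filter_range]
  rw [Finset.card_filter_add_card_filter_not, Finset.card_range]

def IsJumpValue (M : ℕ → ℕ) (N v : ℕ) : Prop :=
  ∃ i < N, M i < M (i + 1) ∧ M (i + 1) = v + 1

instance (M : ℕ → ℕ) (N : ℕ) : DecidablePred (IsJumpValue M N) := fun _ => by
  unfold IsJumpValue; infer_instance

noncomputable def standardFill (M : ℕ → ℕ) (N j : ℕ) : ℕ :=
  if M j < M (j + 1) then M (j + 1) - 1
  else Nat.nth (fun v => ¬ IsJumpValue M N v) (Nat.count (fun i => ¬ M i < M (i + 1)) j)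

theorem isJumpValue_standardFill {M : ℕ → ℕ} {N j : ℕ} (hj : j < N)
    (hjump : M j < M (j + 1)) : IsJumpValue M N (standardFill M N j) :=
  ⟨j, hj, hjump, by rw [standardFill, if_pos hjump]; omega⟩

namespace IsDyckProfile

variable {N : ℕ} {M : ℕ → ℕ}

theorem count_isJumpValue_le (hM : IsDyckProfile N M) (j : ℕ) :
    Nat.count (IsJumpValue M N) (M j) ≤ Nat.count (fun i => M i < M (i + 1)) j := by
  simp only [Nat.count_eq_card_filter_range]
  calc (Finset.range (M j) |>.filter (IsJumpValue M N)).card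
      ≤ ((Finset.range j |>.filter fun i => M i < M (i + 1)).image fun i => M (i + 1) - 1).card :=
        Finset.card_le_card fun v hv => ?_
    _ ≤ _ := Finset.card_image_le
  obtain ⟨hvj, i, hiN, hjump, hv⟩ := by simpa using hv
  refine Finset.mem_image.mpr ⟨i, ?_, by omega⟩
  have : i < j := by
    by_contra! hji
    have := hM.mono hji
    omega
  simpa [this] using hjump

/-- At most as many jump values as jumps lie below `M j`, and `j < M j` at a flat `j`. -/
theorem count_flat_lt (hM : IsDyckProfile N M) {j : ℕ} (hj : j < N)
    (hflat : ¬ M j < M (j + 1)) :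
    Nat.count (fun i => ¬ M i < M (i + 1)) j <
      Nat.count (fun v => ¬ IsJumpValue M N v) (M j) := by
  have h1 := Nat.count_add_count_not (fun i => M i < M (i + 1)) j
  have h2 := Nat.count_add_count_not (IsJumpValue M N) (M j)
  have h3 := hM.count_isJumpValue_le j
  have h4 := hM.self_le (j + 1) hj
  omega

theorem standardFill_lt_of_flat (hM : IsDyckProfile N M) {j : ℕ} (hj : j < N)
    (hflat : ¬ M j < M (j + 1)) : standardFill M N j < M j := by
  rw [standardFill, if_neg hflat]
  exact Nat.nth_lt_of_lt_count (hM.count_flat_lt hj hflat)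

theorem not_isJumpValue_standardFill (hM : IsDyckProfile N M) {j : ℕ} (hj : j < N)
    (hflat : ¬ M j < M (j + 1)) : ¬ IsJumpValue M N (standardFill M N j) := by
  rw [standardFill, if_neg hflat]
  exact Nat.nth_mem _ fun hf => (hM.count_flat_lt hj hflat).trans_le (Nat.count_le_card hf _)

theorem standardFill_lt (hM : IsDyckProfile N M) {j : ℕ} (hj : j < N) :
    standardFill M N j < N := by
  have hle : M (j + 1) ≤ N := hM.top ▸ hM.mono (show j + 1 ≤ N by omega)
  by_cases hjump : M j < M (j + 1)
  · rw [standardFill, if_pos hjump]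
    omega
  · have := hM.standardFill_lt_of_flat hj hjump
    have := hM.mono (show j ≤ j + 1 by omega)
    omega

theorem succ_eq_max_standardFill (hM : IsDyckProfile N M) {j : ℕ} (hj : j < N) :
    M (j + 1) = max (M j) (standardFill M N j + 1) := by
  by_cases hjump : M j < M (j + 1)
  · rw [standardFill, if_pos hjump]
    omega
  · have := hM.standardFill_lt_of_flat hj hjump
    have := hM.mono (show j ≤ j + 1 by omega)
    omega

theorem standardFill_lt_standardFill (hM : IsDyckProfile N M) {i j : ℕ} (hij : i < j)
    (hj : j < N) (hkind : M i < M (i + 1) ↔ M j < M (j + 1)) :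
    standardFill M N i < standardFill M N j := by
  by_cases hjump : M j < M (j + 1)
  · have := hM.mono (show i + 1 ≤ j by omega)
    rw [standardFill, standardFill, if_pos (hkind.mpr hjump), if_pos hjump]
    omega
  · rw [standardFill, standardFill, if_neg (mt hkind.mp hjump), if_neg hjump]
    exact Nat.nth_lt_nth' (Nat.count_strict_mono (mt hkind.mp hjump) hij)
      fun hf => (hM.count_flat_lt hj hjump).trans_le (Nat.count_le_card hf _)

theorem standardFill_ne (hM : IsDyckProfile N M) {i j : ℕ} (hij : i < j) (hj : j < N) :
    standardFill M N i ≠ standardFill M N j := by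
  by_cases hkind : M i < M (i + 1) ↔ M j < M (j + 1)
  · exact (hM.standardFill_lt_standardFill hij hj hkind).ne
  · by_cases hjump : M j < M (j + 1)
    · have := hM.not_isJumpValue_standardFill (hij.trans hj) (by tauto)
      exact fun h => this (h ▸ isJumpValue_standardFill hj hjump)
    · have := hM.not_isJumpValue_standardFill hj hjump
      exact fun h => this (h ▸ isJumpValue_standardFill (hij.trans hj) (by tauto))

theorem standardFill_injOn (hM : IsDyckProfile N M) :
    Set.InjOn (standardFill M N) (Set.Iio N) := by
  intro i hi j hj h
  by_contra hne
  rcases Nat.lt_or_gt_of_ne hne with hij | hji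
  · exact hM.standardFill_ne hij hj h
  · exact hM.standardFill_ne hji hi h.symm

theorem exists_perm (hM : IsDyckProfile N M) :
    ∃ p : Equiv.Perm (Fin N), ∀ i ≤ N, runMax (valueSeq p) i = M i := by
  obtain ⟨p, hp⟩ := exists_perm_valueSeq (fun _ => hM.standardFill_lt) hM.standardFill_injOn
  exact ⟨p, runMax_eq_of_forall_succ hM.zero fun i hi => by
    rw [hp i hi, hM.succ_eq_max_standardFill hi]⟩

end IsDyckProfile

def profileWord (M : ℕ → ℕ) : ℕ → List Bool
  | 0 => []
  | n + 1 => profileWord M n ++ List.replicate (M (n + 1) - M n) true ++ [false]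

section profileWord

variable {M : ℕ → ℕ}

theorem count_false_profileWord (n : ℕ) : (profileWord M n).count false = n := by
  induction n with
  | zero => rfl
  | succ n ih => simp [profileWord, ih, List.count_replicate]

theorem count_true_profileWord (h0 : M 0 = 0) (hM : Monotone M) (n : ℕ) :
    (profileWord M n).count true = M n := by
  induction n with
  | zero => simp [profileWord, h0]
  | succ n ih =>
    have := hM (show n ≤ n + 1 by omega)
    rw [profileWord, List.count_append, List.count_append, ih, List.count_replicate_self,
      show [false].count true = 0 from rfl]
    omega

theorem profileWord_prefix {m n : ℕ} (h : m ≤ n) : profileWord M m <+: profileWord M n := by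
  induction n, h using Nat.le_induction with
  | base => exact List.prefix_refl _
  | succ n _ ih => exact ih.trans (List.prefix_append_of_prefix (List.prefix_append _ _))

theorem profileWord_congr {M' : ℕ → ℕ} {n : ℕ} (h : ∀ i ≤ n, M i = M' i) :
    profileWord M n = profileWord M' n := by
  induction n with
  | zero => rfl
  | succ n ih =>
    rw [profileWord, profileWord, ih fun i hi => h i (by omega), h n (by omega), h (n + 1) le_rfl]

theorem profileWord_ne_concat_true (n : ℕ) (u : List Bool) : profileWord M n ≠ u ++ [true] := by
  cases n with
  | zero => simp [profileWord]
  | succ n => exact fun h => by simpa [profileWord] using congrArg List.getLast? h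

end profileWord

theorem List.concat_prefix_of_concat_prefix_append_replicate {α : Type*} {a b : α} (hab : a ≠ b)
    {x l : List α} {k : ℕ} (h : x ++ [a] <+: l ++ List.replicate k b) : x ++ [a] <+: l := by
  induction k with
  | zero => simpa using h
  | succ k ih =>
    rw [List.replicate_succ', ← List.append_assoc, List.prefix_concat_iff] at h
    rcases h with h | h
    · exact absurd (List.append_inj_right' h rfl) (by simpa using hab)
    · exact ih h

theorem exists_eq_profileWord_of_prefix {M : ℕ → ℕ} {v : List Bool} {n : ℕ}
    (h : v ++ [false] <+: profileWord M n) : ∃ i < n, v ++ [false] = profileWord M (i + 1) := by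
  induction n with
  | zero => simp [profileWord] at h
  | succ n ih =>
    rw [profileWord, List.prefix_concat_iff] at h
    rcases h with h | h
    · exact ⟨n, n.lt_succ_self, h⟩
    · obtain ⟨i, hi, h⟩ :=
        ih (List.concat_prefix_of_concat_prefix_append_replicate Bool.false_ne_true h)
      exact ⟨i, by omega, h⟩

theorem IsPrefixDyck.of_prefix {l w : List Bool} (hw : IsPrefixDyck w) (h : l <+: w) :
    IsPrefixDyck l := fun t => by
  rw [List.prefix_iff_eq_take.mp h, List.take_take]
  exact hw _

theorem isPrefixDyck_of_forall_prefix {w : List Bool}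
    (h : ∀ v, v ++ [false] <+: w → (v ++ [false]).count false ≤ (v ++ [false]).count true) :
    IsPrefixDyck w := by
  intro t
  induction t with
  | zero => simp
  | succ t ih =>
    rw [List.take_add_one]
    rcases hwt : w[t]? with _ | _ | _
    · simpa using ih
    · refine h _ ?_
      simpa [List.take_add_one, hwt] using List.take_prefix (t + 1) w
    · rw [Option.toList_some, List.count_append, List.count_append]
      exact Nat.add_le_add ih (Nat.zero_le 1)

theorem isPrefixDyck_profileWord_iff {M : ℕ → ℕ} (h0 : M 0 = 0) (hM : Monotone M) (n : ℕ) :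
    IsPrefixDyck (profileWord M n) ↔ ∀ i ≤ n, i ≤ M i := by
  constructor
  · intro h i hi
    have := h (profileWord M i).length
    rwa [← List.prefix_iff_eq_take.mp (profileWord_prefix hi), count_false_profileWord,
      count_true_profileWord h0 hM] at this
  · intro h
    refine isPrefixDyck_of_forall_prefix fun v hv => ?_
    obtain ⟨i, hi, heq⟩ := exists_eq_profileWord_of_prefix hv
    rw [heq, count_false_profileWord, count_true_profileWord h0 hM]
    exact h (i + 1) hi

theorem mem_neCorners_iff {w : List Bool} {x : ℕ × ℕ} :
    x ∈ neCorners w ↔ ∃ u, u ++ [true, false] <+: w ∧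
      x = ((u ++ [true, false]).count false, (u ++ [true, false]).count true) := by
  constructor
  · rintro ⟨t, ht, ht1, rfl⟩
    have htake : w.take (t + 2) = w.take t ++ [true, false] := by
      rw [List.take_add_one, List.take_add_one, ht, ht1]
      simp
    exact ⟨w.take t, htake ▸ List.take_prefix _ _, by rw [htake]⟩
  · rintro ⟨u, ⟨r, rfl⟩, rfl⟩
    refine ⟨u.length, by simp, by simp, ?_⟩
    rw [show u.length + 2 = (u ++ [true, false]).length by simp, List.take_left]

theorem neCorners_profileWord {M : ℕ → ℕ} (h0 : M 0 = 0) (hM : Monotone M) (n : ℕ) :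
    neCorners (profileWord M n) = jumpSet M n := by
  ext x
  rw [mem_neCorners_iff]
  constructor
  · rintro ⟨u, hu, rfl⟩
    obtain ⟨i, hi, heq⟩ :=
      exists_eq_profileWord_of_prefix (v := u ++ [true]) (by simpa using hu)
    refine ⟨i, hi, ?_, ?_⟩
    · by_contra hflat
      rw [profileWord, Nat.sub_eq_zero_of_le (not_lt.mp hflat), List.replicate_zero,
        List.append_nil] at heq
      exact profileWord_ne_concat_true i u (List.append_cancel_right heq).symm
    · rw [show u ++ [true, false] = u ++ [true] ++ [false] by simp, heq,
        count_false_profileWord, count_true_profileWord h0 hM]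
  · rintro ⟨i, hi, hjump, rfl⟩
    obtain ⟨k, hk⟩ : ∃ k, M (i + 1) - M i = k + 1 :=
      ⟨_, (Nat.succ_pred_eq_of_pos (by omega)).symm⟩
    have hword :
        profileWord M i ++ List.replicate k true ++ [true, false] = profileWord M (i + 1) := by
      simp [profileWord, hk, List.replicate_succ']
    refine ⟨_, hword ▸ profileWord_prefix hi, ?_⟩
    rw [hword, count_false_profileWord, count_true_profileWord h0 hM]

theorem exists_profileWord_append (w : List Bool) :
    ∃ M : ℕ → ℕ, M 0 = 0 ∧ Monotone M ∧
      ∃ j, w = profileWord M (w.count false) ++ List.replicate j true := by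
  induction w using List.reverseRecOn with
  | nil => exact ⟨fun _ => 0, rfl, monotone_const, 0, rfl⟩
  | append_singleton v b ih =>
    obtain ⟨M, h0, hM, j, hv⟩ := ih
    set n := v.count false
    cases b with
    | true =>
      refine ⟨M, h0, hM, j + 1, ?_⟩
      rw [show (v ++ [true]).count false = n by simp [n]]
      nth_rewrite 1 [hv]
      simp [List.replicate_succ']
    | false =>
      let M' : ℕ → ℕ := fun i => if i ≤ n then M i else M n + j
      have hM' : Monotone M' := monotone_nat_of_le_succ fun i => by
        simp only [M']
        split_ifs with h1 h2 h2
        · exact hM (by omega)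
        · exact (hM h1).trans (Nat.le_add_right _ _)
        · omega
        · exact le_rfl
      refine ⟨M', by simp [M', h0], hM', 0, ?_⟩
      have hword : profileWord M' n = profileWord M n :=
        profileWord_congr fun i hi => by simp [M', hi]
      have hjump : M' (n + 1) - M' n = j := by simp [M']
      rw [List.count_append, List.count_singleton_self, List.replicate_zero, List.append_nil,
        profileWord, hword, hjump]
      nth_rewrite 1 [hv]
      rfl

theorem IsDyckProfile.isDyck_profileWord {N : ℕ} {M : ℕ → ℕ} (hM : IsDyckProfile N M) :
    IsDyck N (profileWord M N) := by
  refine ⟨?_, count_false_profileWord N,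
    (isPrefixDyck_profileWord_iff hM.zero hM.mono N).mpr hM.self_le⟩
  rw [← List.count_true_add_count_false, count_true_profileWord hM.zero hM.mono, hM.top,
    count_false_profileWord]
  omega

theorem exists_isDyckProfile_of_isDyck {N : ℕ} {w : List Bool} (hw : IsDyck N w) :
    ∃ M, IsDyckProfile N M ∧ w = profileWord M N := by
  obtain ⟨hlen, hfalse, hprefix⟩ := hw
  obtain ⟨M, h0, hM, j, hwM⟩ := exists_profileWord_append w
  rw [hfalse] at hwM
  have hle := (isPrefixDyck_profileWord_iff h0 hM N).mp
    (hprefix.of_prefix (hwM ▸ List.prefix_append _ _))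
  have hcount : M N + j = N := by
    have h := List.count_true_add_count_false w
    rw [hlen, hfalse, hwM, List.count_append, count_true_profileWord h0 hM,
      List.count_replicate_self] at h
    omega
  have hj : j = 0 := by have := hle N le_rfl; omega
  exact ⟨M, ⟨h0, hM, hle, by omega⟩, by rw [hwM, hj, List.replicate_zero, List.append_nil]⟩

/-- The possible sets of (position, value) pairs of left-to-right maxima of
permutations of size `N` are exactly (hence in bijection with, via the identity
correspondence `(i_j, p_{i_j}) ↔ (column, height)`) the sets of northeast corners
of Dyck paths of size `N`. -/
theorem ltrData_sets_eq_neCorner_sets (N : ℕ) :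
    {A : Set (ℕ × ℕ) | ∃ p : Equiv.Perm (Fin N), A = ltrData p} =
      {A : Set (ℕ × ℕ) | ∃ w : List Bool, IsDyck N w ∧ A = neCorners w} := by
  ext A
  constructor
  · rintro ⟨p, rfl⟩
    have hM := isDyckProfile_runMax_valueSeq p
    refine ⟨profileWord (runMax (valueSeq p)) N, hM.isDyck_profileWord, ?_⟩
    rw [ltrData_eq_jumpSet, neCorners_profileWord hM.zero hM.mono]
  · rintro ⟨w, hw, rfl⟩
    obtain ⟨M, hM, rfl⟩ := exists_isDyckProfile_of_isDyck hw
    obtain ⟨p, hp⟩ := hM.exists_perm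
    refine ⟨p, ?_⟩
    rw [ltrData_eq_jumpSet, jumpSet_congr hp, neCorners_profileWord hM.zero hM.mono]
end

section
/- Every permutation obtained from a set of left-to-right-maxima data by placing the prescribed maxima in their positions and filling the remaining positions with the complementary values in increasing order is 321-avoiding. -/
/-- `p` avoids the pattern 321: no indices `i < j < l` with `p i > p j > p l`. -/
def Avoids321 {N : ℕ} (p : Equiv.Perm (Fin N)) : Prop :=
  ¬ ∃ i j l : Fin N, i < j ∧ j < l ∧ p l < p j ∧ p j < p i

theorem not_isLTRMax_of_lt_of_apply_lt {N : ℕ} {p : Equiv.Perm (Fin N)} {i j : Fin N}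
    (hij : i < j) (hp : p j < p i) : ¬ IsLTRMax p j :=
  fun h => (h i hij).asymm hp

/-- Any permutation obtained from left-to-right-maxima data by placing the
prescribed maxima in their positions and filling the remaining positions with the
complementary values in increasing order is 321-avoiding.  Such canonical
completions are exactly the permutations whose non-left-to-right-maxima form an
increasing subsequence. -/
theorem canonical_completion_avoids321 (N : ℕ) (p : Equiv.Perm (Fin N))
    (hfill : ∀ i j : Fin N, i < j → ¬ IsLTRMax p i → ¬ IsLTRMax p j → p i < p j) :
    Avoids321 p := by
  rintro ⟨i, j, l, hij, hjl, hlj, hji⟩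
  have hj : ¬ IsLTRMax p j := not_isLTRMax_of_lt_of_apply_lt hij hji
  have hl : ¬ IsLTRMax p l := not_isLTRMax_of_lt_of_apply_lt hjl hlj
  exact (hfill j l hjl hj hl).asymm hlj
end

section
/- The number of 321-avoiding permutations of size N whose left-to-right maxima coincide with a given valid set of (position, value) pairs is exactly one. -/
/-!
Existence: among the permutations with the prescribed left-to-right maxima data, take one
maximising `∑ k, k * p k`. If it had an occurrence `i < j < l` of 321, swapping the values at
`j` and `l` would keep the data (both values stay below `p i`, so no position changes status)
and strictly increase the sum.

Uniqueness: in a 321-avoiding permutation every position that is not a left-to-right maximum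
carries the smallest value not used before it, so the permutation is determined by its data.
-/

open Equiv Finset

section LeftToRightMaxima

variable {N : ℕ}

theorem ltrData_subset_iff {p q : Perm (Fin N)} :
    ltrData p ⊆ ltrData q ↔ ∀ k, IsLTRMax p k → IsLTRMax q k ∧ p k = q k := by
  constructor
  · intro h k hk
    obtain ⟨k', hk', hkk'⟩ := h ⟨k, hk, rfl⟩
    simp only [Prod.mk.injEq, add_left_inj, Fin.val_inj] at hkk'
    obtain ⟨rfl, hval⟩ := hkk'
    exact ⟨hk', hval⟩
  · rintro h _ ⟨k, hk, rfl⟩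
    exact ⟨k, (h k hk).1, by rw [(h k hk).2]⟩

theorem ltrData_eq_iff {p q : Perm (Fin N)} :
    ltrData p = ltrData q ↔
      ∀ k, (IsLTRMax p k → IsLTRMax q k ∧ p k = q k) ∧
        (IsLTRMax q k → IsLTRMax p k ∧ q k = p k) := by
  simp only [Set.Subset.antisymm_iff, ltrData_subset_iff, ← forall_and]

theorem isLTRMax_of_isLTRMax_mul_swap {p : Perm (Fin N)} {i j l k : Fin N}
    (hij : i < j) (hil : i < l) (hj : p j < p i) (hl : p l < p i)
    (hk : IsLTRMax (p * swap j l) k) : IsLTRMax p k := by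
  have hkj : k ≠ j := by
    rintro rfl
    have := hk i hij
    simp only [Perm.mul_apply, swap_apply_left, swap_apply_of_ne_of_ne hij.ne hil.ne] at this
    exact this.not_gt hl
  have hkl : k ≠ l := by
    rintro rfl
    have := hk i hil
    simp only [Perm.mul_apply, swap_apply_right, swap_apply_of_ne_of_ne hij.ne hil.ne] at this
    exact this.not_gt hj
  have hpk : (p * swap j l) k = p k := by
    rw [Perm.mul_apply, swap_apply_of_ne_of_ne hkj hkl]
  intro m hmk
  by_cases hm : m = j ∨ m = l
  · have hpi : (p * swap j l) i = p i := by
      rw [Perm.mul_apply, swap_apply_of_ne_of_ne hij.ne hil.ne]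
    have hik : i < k := by rcases hm with rfl | rfl <;> exact lt_trans ‹_› hmk
    calc p m < p i := by rcases hm with rfl | rfl <;> assumption
      _ < p k := by rw [← hpi, ← hpk]; exact hk i hik
  · push Not at hm
    have := hk m hmk
    rwa [Perm.mul_apply, swap_apply_of_ne_of_ne hm.1 hm.2, hpk] at this

theorem ltrData_mul_swap {p : Perm (Fin N)} {i j l : Fin N}
    (hij : i < j) (hil : i < l) (hj : p j < p i) (hl : p l < p i) :
    ltrData (p * swap j l) = ltrData p := by
  have hi : (p * swap j l) i = p i := by
    rw [Perm.mul_apply, swap_apply_of_ne_of_ne hij.ne hil.ne]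
  have hswap_j : (p * swap j l) j < (p * swap j l) i := by
    rwa [hi, Perm.mul_apply, swap_apply_left]
  have hswap_l : (p * swap j l) l < (p * swap j l) i := by
    rwa [hi, Perm.mul_apply, swap_apply_right]
  have hback : ∀ k, IsLTRMax p k → IsLTRMax (p * swap j l) k := fun k hk =>
    isLTRMax_of_isLTRMax_mul_swap hij hil hswap_j hswap_l (by rwa [mul_swap_mul_self])
  have hval : ∀ k, IsLTRMax p k → (p * swap j l) k = p k := by
    intro k hk
    have hkj : k ≠ j := by rintro rfl; exact (hk i hij).not_gt hj
    have hkl : k ≠ l := by rintro rfl; exact (hk i hil).not_gt hl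
    rw [Perm.mul_apply, swap_apply_of_ne_of_ne hkj hkl]
  refine ltrData_eq_iff.2 fun k => ⟨fun hk => ?_, fun hk => ?_⟩
  · have hk' := isLTRMax_of_isLTRMax_mul_swap hij hil hj hl hk
    exact ⟨hk', hval k hk'⟩
  · exact ⟨hback k hk, (hval k hk).symm⟩

def weightedSum (p : Perm (Fin N)) : ℕ := ∑ k : Fin N, (k : ℕ) * (p k : ℕ)

theorem weightedSum_lt_weightedSum_mul_swap {p : Perm (Fin N)} {j l : Fin N}
    (hjl : j < l) (hp : p l < p j) : weightedSum p < weightedSum (p * swap j l) := by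
  have hsplit : ∀ q : Perm (Fin N), weightedSum q =
      ∑ k ∈ univ \ {j, l}, (k : ℕ) * (q k : ℕ) + ((j : ℕ) * q j + (l : ℕ) * q l) := by
    intro q
    rw [weightedSum, ← sum_sdiff (subset_univ {j, l}), sum_pair hjl.ne]
  have hrest : ∑ k ∈ univ \ {j, l}, (k : ℕ) * ((p * swap j l) k : ℕ) =
      ∑ k ∈ univ \ {j, l}, (k : ℕ) * (p k : ℕ) := by
    refine sum_congr rfl fun k hk => ?_
    simp only [mem_sdiff, mem_insert, mem_singleton, not_or] at hk
    rw [Perm.mul_apply, swap_apply_of_ne_of_ne hk.2.1 hk.2.2]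
  rw [hsplit p, hsplit (p * swap j l), hrest, Perm.mul_apply, Perm.mul_apply, swap_apply_left,
    swap_apply_right]
  have hjl' : (j : ℕ) < l := hjl
  have hp' : (p l : ℕ) < p j := hp
  nlinarith

theorem exists_avoids321_ltrData_eq (p₀ : Perm (Fin N)) :
    ∃ p : Perm (Fin N), Avoids321 p ∧ ltrData p = ltrData p₀ := by
  obtain ⟨p, hp, hmax⟩ := (univ.filter fun p : Perm (Fin N) => ltrData p = ltrData p₀)
    |>.exists_max_image weightedSum ⟨p₀, by simp⟩
  rw [mem_filter] at hp
  refine ⟨p, ?_, hp.2⟩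
  rintro ⟨i, j, l, hij, hjl, hlj, hji⟩
  have hswap : ltrData (p * swap j l) = ltrData p₀ :=
    (ltrData_mul_swap hij (hij.trans hjl) hji (hlj.trans hji)).trans hp.2
  exact (hmax _ (mem_filter.2 ⟨mem_univ _, hswap⟩)).not_gt
    (weightedSum_lt_weightedSum_mul_swap hjl hlj)

theorem Avoids321.le_of_not_isLTRMax {p : Perm (Fin N)} (hp : Avoids321 p) {j : Fin N}
    (hj : ¬IsLTRMax p j) {v : Fin N} (hv : ∀ i < j, p i ≠ v) : p j ≤ v := by
  have hpv : p (p.symm v) = v := p.apply_symm_apply v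
  rcases lt_trichotomy (p.symm v) j with hlt | heq | hgt
  · exact absurd hpv (hv _ hlt)
  · rw [← hpv, heq]
  · by_contra! hvj
    obtain ⟨i, hij, hji⟩ : ∃ i < j, p j ≤ p i := by simpa [IsLTRMax] using hj
    have hji' : p j < p i := hji.lt_of_ne fun h => hij.ne (p.injective h).symm
    exact hp ⟨i, j, p.symm v, hij, hgt, by rwa [hpv], hji'⟩

theorem Avoids321.eq_of_ltrData_eq {p q : Perm (Fin N)} (hp : Avoids321 p)
    (hq : Avoids321 q) (h : ltrData p = ltrData q) : p = q := by
  ext1 j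
  induction j using WellFoundedLT.induction with
  | ind j ih =>
  by_cases hj : IsLTRMax p j
  · exact ((ltrData_eq_iff.1 h j).1 hj).2
  have hj' : ¬IsLTRMax q j := fun hq => hj ((ltrData_eq_iff.1 h j).2 hq).1
  apply le_antisymm
  · refine hp.le_of_not_isLTRMax hj fun i hij he => hij.ne (q.injective ?_)
    rw [← he, ih i hij]
  · refine hq.le_of_not_isLTRMax hj' fun i hij he => hij.ne (p.injective ?_)
    rw [← he, ih i hij]

end LeftToRightMaxima

/-- For each valid set of (position, value) pairs of left-to-right maxima (i.e. one
arising from at least one permutation `p₀` of size `N`), there is exactly one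
321-avoiding permutation of size `N` whose left-to-right maxima data is that set. -/
theorem existsUnique_avoids321_with_ltrData (N : ℕ) (p₀ : Equiv.Perm (Fin N)) :
    ∃! p : Equiv.Perm (Fin N), Avoids321 p ∧ ltrData p = ltrData p₀ := by
  obtain ⟨p, hp, hdata⟩ := exists_avoids321_ltrData_eq p₀
  exact ⟨p, ⟨hp, hdata⟩, fun q ⟨hq, hqdata⟩ => hq.eq_of_ltrData_eq hp (hqdata.trans hdata.symm)⟩
end

section
/- The numbers T_i(N) of partial Dyck paths from (0,0) to (N-1-i, N-1) satisfy the recurrence T_i(N) = T_{i-1}(N) - T_{i-2}(N-1) for i ≥ 3, with T_1(N) = C_{N-1} and T_2(N) = C_{N-1} - C_{N-2}. -/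
/-- The number of partial Dyck paths from `(0,0)` to `(a,b)`. -/
noncomputable def partialDyckCount (a b : ℕ) : ℕ :=
  Nat.card {w : List Bool // w.length = a + b ∧ w.count false = a ∧ IsPrefixDyck w}

/-- `T_i(N)`: the number of partial Dyck paths from `(0,0)` to `(N-1-i, N-1)`. -/
noncomputable def T (i N : ℕ) : ℕ := partialDyckCount (N - 1 - i) (N - 1)

/-! Write `P(a, b)` for the number of partial Dyck paths ending at `(a, b)`, so that
`T_i(N) = P(k, i + k)` when `N = i + k + 1`. Splitting off the last step gives Pascal's rule
`P(a+1, b+1) = P(a, b+1) + P(a+1, b)` for `a ≤ b`, i.e. `T_{i+2}(N+1) + T_i(N) = T_{i+1}(N+1)`,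
which is the recurrence. The initial values come from `P(n, n) = C_n` (partial Dyck paths ending
on the diagonal are Dyck words) and `P(n, n+1) = P(n+1, n+1) = C_{n+1}`, as `P(n+1, n) = 0`. -/

open List DyckStep

def partialDyckWords (a b : ℕ) : Set (List Bool) :=
  {w | w.length = a + b ∧ w.count false = a ∧ IsPrefixDyck w}

lemma partialDyckCount_eq_ncard (a b : ℕ) :
    partialDyckCount a b = (partialDyckWords a b).ncard := by
  rw [← Nat.card_coe_set_eq]; rfl

lemma partialDyckWords_finite (a b : ℕ) : (partialDyckWords a b).Finite :=
  (List.finite_length_eq Bool (a + b)).subset fun _ hw => hw.1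

lemma isPrefixDyck_append_singleton {u : List Bool} {x : Bool} :
    IsPrefixDyck (u ++ [x]) ↔
      IsPrefixDyck u ∧ (u ++ [x]).count false ≤ (u ++ [x]).count true := by
  refine ⟨fun h => ⟨fun t => ?_, by simpa only [take_length] using h (u ++ [x]).length⟩,
    fun ⟨hu, hlast⟩ t => ?_⟩
  · have ht := h (min t u.length)
    rwa [take_append_of_le_length (min_le_right _ _), ← take_take, take_length] at ht
  · rcases le_or_gt t u.length with ht | ht
    · rw [take_append_of_le_length ht]; exact hu t
    · rw [take_of_length_le (by simpa using ht)]; exact hlast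

lemma partialDyckWords_succ_succ {a b : ℕ} (hab : a ≤ b) :
    partialDyckWords (a + 1) (b + 1) =
      (· ++ [false]) '' partialDyckWords a (b + 1) ∪
        (· ++ [true]) '' partialDyckWords (a + 1) b := by
  ext w
  rcases w.eq_nil_or_concat' with rfl | ⟨u, x, rfl⟩
  · simp [partialDyckWords]
  have hcount := u.count_false_add_count_true
  cases x <;> simp [partialDyckWords, isPrefixDyck_append_singleton] <;>
    exact ⟨fun ⟨_, hc, hw, _⟩ => ⟨by omega, hc, hw⟩,
      fun ⟨_, hc, hw⟩ => ⟨by omega, hc, hw, by omega⟩⟩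

theorem partialDyckCount_succ_succ {a b : ℕ} (hab : a ≤ b) :
    partialDyckCount (a + 1) (b + 1) =
      partialDyckCount a (b + 1) + partialDyckCount (a + 1) b := by
  have hdisj : Disjoint ((· ++ [false]) '' partialDyckWords a (b + 1))
      ((· ++ [true]) '' partialDyckWords (a + 1) b) := by
    rw [Set.disjoint_left]
    rintro _ ⟨u, -, rfl⟩ ⟨v, -, huv⟩
    simpa using congrArg List.getLast? huv
  simp only [partialDyckCount_eq_ncard, partialDyckWords_succ_succ hab,
    Set.ncard_union_eq hdisj ((partialDyckWords_finite _ _).image _)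
      ((partialDyckWords_finite _ _).image _),
    Set.ncard_image_of_injective _ (append_left_injective _)]

theorem partialDyckCount_eq_zero_of_lt {a b : ℕ} (h : b < a) : partialDyckCount a b = 0 := by
  rw [partialDyckCount_eq_ncard, Set.ncard_eq_zero (partialDyckWords_finite a b)]
  refine Set.eq_empty_of_forall_notMem fun w ⟨hlen, hfalse, hw⟩ => ?_
  have hall := hw w.length
  rw [take_length] at hall
  have := w.count_false_add_count_true
  omega

def boolEquivDyckStep : Bool ≃ DyckStep where
  toFun b := bif b then U else D
  invFun s := s == U
  left_inv b := by cases b <;> rfl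
  right_inv s := by cases s <;> rfl

lemma count_U_map_boolEquivDyckStep (w : List Bool) :
    (w.map boolEquivDyckStep).count U = w.count true :=
  count_map_of_injective w _ boolEquivDyckStep.injective true

lemma count_D_map_boolEquivDyckStep (w : List Bool) :
    (w.map boolEquivDyckStep).count D = w.count false :=
  count_map_of_injective w _ boolEquivDyckStep.injective false

lemma isPrefixDyck_iff_count_D_le_count_U (w : List Bool) :
    IsPrefixDyck w ↔ ∀ i, ((w.map boolEquivDyckStep).take i).count D ≤
      ((w.map boolEquivDyckStep).take i).count U := by
  simp only [IsPrefixDyck, ← map_take, count_U_map_boolEquivDyckStep,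
    count_D_map_boolEquivDyckStep]

lemma mem_partialDyckWords_self_iff {n : ℕ} (w : List Bool) :
    w ∈ partialDyckWords n n ↔ (w.map boolEquivDyckStep).count U = n ∧
      (w.map boolEquivDyckStep).count D = n ∧
      ∀ i, ((w.map boolEquivDyckStep).take i).count D ≤
        ((w.map boolEquivDyckStep).take i).count U := by
  have := w.count_false_add_count_true
  rw [count_U_map_boolEquivDyckStep, count_D_map_boolEquivDyckStep,
    ← isPrefixDyck_iff_count_D_le_count_U]
  exact ⟨fun ⟨_, hc, hw⟩ => ⟨by omega, hc, hw⟩, fun ⟨_, hc, hw⟩ => ⟨by omega, hc, hw⟩⟩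

def partialDyckWordsSelfEquiv (n : ℕ) :
    partialDyckWords n n ≃ {p : DyckWord // p.semilength = n} where
  toFun w :=
    have h := (mem_partialDyckWords_self_iff w.1).1 w.2
    ⟨⟨w.1.map boolEquivDyckStep, h.1.trans h.2.1.symm, h.2.2⟩, h.1⟩
  invFun p :=
    ⟨p.1.toList.map boolEquivDyckStep.symm, (mem_partialDyckWords_self_iff _).2 <| by
      rw [map_map, Equiv.self_comp_symm, map_id]
      exact ⟨p.2, p.1.semilength_eq_count_D.symm.trans p.2, p.1.count_D_le_count_U⟩⟩
  left_inv w := by ext1; simp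
  right_inv p := by ext1; ext1; simp

theorem partialDyckCount_self (n : ℕ) : partialDyckCount n n = catalan n := by
  rw [← DyckWord.card_dyckWord_semilength_eq_catalan, ← Nat.card_eq_fintype_card]
  exact Nat.card_congr (partialDyckWordsSelfEquiv n)

theorem partialDyckCount_self_succ (n : ℕ) : partialDyckCount n (n + 1) = catalan (n + 1) := by
  have := partialDyckCount_succ_succ (le_refl n)
  rw [partialDyckCount_eq_zero_of_lt (Nat.lt_succ_self n), partialDyckCount_self] at this
  omega

lemma T_eq_partialDyckCount {i k N : ℕ} (h : i + k + 1 = N) :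
    T i N = partialDyckCount k (N - 1) := by
  rw [T]; congr 1; omega

lemma T_zero (N : ℕ) : T 0 N = catalan (N - 1) := partialDyckCount_self _

lemma T_one (N : ℕ) : T 1 N = catalan (N - 1) := by
  rcases N with _ | _ | n
  · exact partialDyckCount_self 0
  · exact partialDyckCount_self 0
  · exact partialDyckCount_self_succ n

lemma T_add_two_add_T {i N : ℕ} (h : i + 2 ≤ N) :
    T (i + 2) (N + 1) + T i N = T (i + 1) (N + 1) := by
  obtain ⟨k, hk⟩ : ∃ k, i + (k + 1) + 1 = N := ⟨N - i - 2, by omega⟩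
  have pascal := partialDyckCount_succ_succ (show k ≤ N - 1 by omega)
  rw [Nat.sub_add_cancel (by omega : 1 ≤ N)] at pascal
  rw [T_eq_partialDyckCount (k := k) (by omega), T_eq_partialDyckCount hk,
    T_eq_partialDyckCount (k := k + 1) (by omega), Nat.add_sub_cancel, pascal]

/-- `T_1(N) = C_{N-1}`, `T_2(N) = C_{N-1} - C_{N-2}`, and for `3 ≤ i ≤ N-1`,
`T_i(N) = T_{i-1}(N) - T_{i-2}(N-1)`. -/
theorem T_recurrence (N : ℕ) :
    (2 ≤ N → T 1 N = catalan (N - 1)) ∧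
    (3 ≤ N → T 2 N = catalan (N - 1) - catalan (N - 2)) ∧
    (∀ i : ℕ, 3 ≤ i → i ≤ N - 1 → T i N = T (i - 1) N - T (i - 2) (N - 1)) := by
  refine ⟨fun _ => T_one N, fun hN => ?_, fun i hi hiN => ?_⟩
  · obtain ⟨M, rfl⟩ : ∃ M, N = M + 1 := ⟨N - 1, by omega⟩
    have := T_add_two_add_T (i := 0) (N := M) (by omega)
    rw [zero_add, T_one, T_zero, Nat.add_sub_cancel] at this
    show T 2 (M + 1) = catalan M - catalan (M - 1)
    omega
  · obtain ⟨j, rfl⟩ : ∃ j, i = j + 2 := ⟨i - 2, by omega⟩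
    obtain ⟨M, rfl⟩ : ∃ M, N = M + 1 := ⟨N - 1, by omega⟩
    have := T_add_two_add_T (i := j) (N := M) (by omega)
    show T (j + 2) (M + 1) = T (j + 1) (M + 1) - T j M
    omega
end

section
/- The number of 321-avoiding permutations of size N that are k-winnable equals the sum over i = 1 to N-k of binom((k-1)+(N-i), k-1) · ((N-k-i+2)/((N-i)+1)) · (N-k-i+1). -/
/-- The number of 321-avoiding permutations of size `N` that are `k`-winnable. -/
noncomputable def winCount (N k : ℕ) : ℕ :=
  Nat.card {p : Equiv.Perm (Fin N) // Avoids321 p ∧ Winnable N k p}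
open Finset

section RunningMax

variable {N : ℕ} {α : Type*} [LinearOrder α]

def runningMax (f : Fin N → α) (j : Fin N) : α :=
  (Iic j).sup' nonempty_Iic f

theorem le_runningMax (f : Fin N → α) {i j : Fin N} (h : i ≤ j) : f i ≤ runningMax f j :=
  le_sup' f (mem_Iic.2 h)

theorem exists_le_runningMax_eq (f : Fin N → α) (j : Fin N) :
    ∃ i ≤ j, f i = runningMax f j := by
  obtain ⟨i, hi, h⟩ := exists_mem_eq_sup' nonempty_Iic f
  exact ⟨i, mem_Iic.1 hi, h.symm⟩

theorem monotone_runningMax (f : Fin N → α) : Monotone (runningMax f) := fun _ _ h =>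
  sup'_mono f (Iic_subset_Iic.2 h) nonempty_Iic

def jumps (f : Fin N → α) : Finset (Fin N) := {j | ∀ i < j, f i < f j}

theorem mem_jumps {f : Fin N → α} {j : Fin N} : j ∈ jumps f ↔ ∀ i < j, f i < f j := by
  simp [jumps]

theorem strictMonoOn_jumps (f : Fin N → α) : StrictMonoOn f (jumps f) :=
  fun _ _ _ hj hij => mem_jumps.1 hj _ hij

theorem runningMax_eq_of_mem_jumps {f : Fin N → α} {j : Fin N} (hj : j ∈ jumps f) :
    runningMax f j = f j :=
  le_antisymm (sup'_le _ _ fun i hi => (mem_Iic.1 hi).lt_or_eq.elim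
    (fun h => (mem_jumps.1 hj i h).le) (fun h => h ▸ le_rfl)) (le_runningMax f le_rfl)

theorem jumps_runningMax (f : Fin N → α) : jumps (runningMax f) = jumps f := by
  ext j
  refine ⟨fun hj => ?_, fun hj => mem_jumps.2 fun i hij => ?_⟩
  · obtain ⟨k, hkj, hk⟩ := exists_le_runningMax_eq f j
    obtain rfl : k = j := hkj.eq_of_not_lt fun hlt =>
      (mem_jumps.1 hj k hlt).not_ge (hk ▸ le_runningMax f le_rfl)
    exact mem_jumps.2 fun i hij => hk ▸ (le_runningMax f le_rfl).trans_lt (mem_jumps.1 hj i hij)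
  · rw [runningMax_eq_of_mem_jumps hj]
    exact (sup'_lt_iff _).2 fun i hi => mem_jumps.1 hj i ((mem_Iic.1 hi).trans_lt hij)

theorem Monotone.exists_mem_jumps_le_eq {f : Fin N → α} (hf : Monotone f) (j : Fin N) :
    ∃ i ∈ jumps f, i ≤ j ∧ f i = f j := by
  have hne : ({i | f i = f j} : Finset (Fin N)).Nonempty := ⟨j, by simp⟩
  set i := ({i | f i = f j} : Finset (Fin N)).min' hne
  have hi : f i = f j := by simpa using min'_mem _ hne
  refine ⟨i, mem_jumps.2 fun k hk => (hf hk.le).lt_of_ne fun h => ?_, min'_le _ _ (by simp), hi⟩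
  exact hk.not_ge (min'_le _ _ (by simp [h, hi]))

theorem exists_mem_jumps_le_runningMax_eq (f : Fin N → α) (j : Fin N) :
    ∃ i ∈ jumps f, i ≤ j ∧ f i = runningMax f j := by
  obtain ⟨i, hi, hij, h⟩ := (monotone_runningMax f).exists_mem_jumps_le_eq j
  rw [jumps_runningMax] at hi
  exact ⟨i, hi, hij, (runningMax_eq_of_mem_jumps hi).symm.trans h⟩

end RunningMax

theorem Monotone.lt_card_filter_lt_iff {N : ℕ} {α : Type*} [LinearOrder α] {f : Fin N → α}
    (hf : Monotone f) (a : α) (j : Fin N) : (j : ℕ) < #{i | f i < a} ↔ f j < a := by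
  constructor
  · intro hj
    by_contra! hja
    have : ({i | f i < a} : Finset (Fin N)) ⊆ Iio j := fun i hi =>
      mem_Iio.2 (lt_of_not_ge fun hji => (hja.trans (hf hji)).not_gt (by simpa using hi))
    simpa using (card_le_card this).trans_lt' hj
  · intro hja
    have : Iic j ⊆ ({i | f i < a} : Finset (Fin N)) := fun i hi => by
      simpa using (hf (mem_Iic.1 hi)).trans_lt hja
    simpa using card_le_card this

theorem card_filter_Iio_orderIso {α β : Type*} [LinearOrder α] [LinearOrder β]
    [LocallyFiniteOrderBot α] [LocallyFiniteOrderBot β] {P : α → Prop} {Q : β → Prop}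
    [DecidablePred P] [DecidablePred Q] (e : {a // P a} ≃o {b // Q b}) (x : {a // P a}) :
    #{b ∈ Iio (e x : β) | Q b} = #{a ∈ Iio (x : α) | P a} := by
  refine card_bij' (fun b hb => e.symm ⟨b, (mem_filter.1 hb).2⟩)
    (fun a ha => e ⟨a, (mem_filter.1 ha).2⟩) (fun b hb => ?_) (fun a ha => ?_) (by simp) (by simp)
  · obtain ⟨hb, hQ⟩ := mem_filter.1 hb
    refine mem_filter.2 ⟨mem_Iio.2 ?_, (e.symm _).2⟩
    exact Subtype.coe_lt_coe.2 (e.symm_apply_lt.2 (Subtype.mk_lt_mk.2 (mem_Iio.1 hb)))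
  · obtain ⟨ha, hP⟩ := mem_filter.1 ha
    exact mem_filter.2 ⟨mem_Iio.2 (Subtype.coe_lt_coe.2 (e.lt_iff_lt.2 (Subtype.mk_lt_mk.2
      (mem_Iio.1 ha)))), (e _).2⟩

def IsBallotSeq {m N : ℕ} (f : Fin m → Fin N) : Prop :=
  Monotone f ∧ ∀ i : Fin m, (i : ℕ) ≤ f i

instance {m N : ℕ} : DecidablePred (IsBallotSeq (m := m) (N := N)) := fun _ => by
  unfold IsBallotSeq Monotone; infer_instance

def ballotSeqs (N c v : ℕ) : Finset (Fin (c + 1) → Fin N) :=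
  {f | IsBallotSeq f ∧ (f (Fin.last c) : ℕ) = v}

section Ballot

variable {N c v : ℕ}

theorem card_ballotSeqs_zero (hv : v < N) : #(ballotSeqs N 0 v) = 1 := by
  refine card_eq_one.2 ⟨fun _ => ⟨v, hv⟩, eq_singleton_iff_unique_mem.2 ⟨?_, fun f hf => ?_⟩⟩
  · simp [ballotSeqs, IsBallotSeq, monotone_const]
  · funext i
    rw [show i = Fin.last 0 from Fin.ext (Nat.lt_one_iff.1 i.isLt)]
    exact Fin.ext (mem_filter.1 hf).2.2

theorem card_filter_ballotSeqs_succ {u : ℕ} (hcv : c + 1 ≤ v) (hv : v < N) (huv : u ≤ v) :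
    #{f ∈ ballotSeqs N (c + 1) v | (f (Fin.last c).castSucc : ℕ) = u} =
      #(ballotSeqs N c u) := by
  refine card_nbij' Fin.init (Fin.snoc · ⟨v, hv⟩) (fun f hf => ?_) (fun g hg => ?_)
    (fun f hf => ?_) (fun g _ => Fin.init_snoc _ _)
  · obtain ⟨hf, hfu⟩ := mem_filter.1 hf
    obtain ⟨⟨hmono, hge⟩, -⟩ := (mem_filter.1 hf).2
    exact mem_filter.2 ⟨mem_univ _, ⟨hmono.comp fun _ _ h => h, fun i => hge i.castSucc⟩, hfu⟩
  · obtain ⟨⟨hmono, hge⟩, hgu⟩ := (mem_filter.1 hg).2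
    have hmono' : Monotone (Fin.snoc g ⟨v, hv⟩ : Fin (c + 2) → Fin N) := by
      simpa [Fin.insertNth_last'] using Fin.insertNth_last_monotone hmono _
        (by rw [Fin.le_def, hgu]; exact huv)
    refine mem_filter.2 ⟨mem_filter.2 ⟨mem_univ _, ⟨hmono', fun i => ?_⟩, by simp⟩, by simpa⟩
    obtain ⟨i, rfl⟩ | rfl := i.eq_castSucc_or_eq_last
    · simpa using hge i
    · simpa using hcv
  · obtain ⟨-, hlast⟩ := (mem_filter.1 (mem_filter.1 hf).1).2
    rw [show (⟨v, hv⟩ : Fin N) = f (Fin.last (c + 1)) from Fin.ext hlast.symm]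
    exact Fin.snoc_init_self f

theorem card_ballotSeqs_succ (hcv : c + 1 ≤ v) (hv : v < N) :
    #(ballotSeqs N (c + 1) v) = ∑ u ∈ Icc c v, #(ballotSeqs N c u) := by
  rw [card_eq_sum_card_fiberwise (f := fun f => (f (Fin.last c).castSucc : ℕ)) (t := Icc c v)
    fun f hf => ?_]
  · exact sum_congr rfl fun u hu => card_filter_ballotSeqs_succ hcv hv (mem_Icc.1 hu).2
  · obtain ⟨⟨hmono, hge⟩, hlast⟩ := (mem_filter.1 hf).2
    exact mem_Icc.2 ⟨by simpa using hge (Fin.last c).castSucc, hlast ▸ hmono (Fin.le_last _)⟩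

end Ballot

/- `(u + c).choose (u + 2) = (u + c).choose (c - 2)` counts the reflected paths; it is written
this way so that it vanishes for `c < 2` without truncated subtraction. -/
theorem sum_Icc_choose_sub_choose {c v : ℕ} (hcv : c ≤ v) :
    ∑ u ∈ Icc c v, (((u + c).choose c : ℚ) - (u + c).choose (u + 2)) =
      (v + c + 1).choose (c + 1) - (v + c + 1).choose (v + 2) := by
  induction v, hcv using Nat.le_induction with
  | base =>
    rw [Icc_self, sum_singleton, Nat.choose_succ_succ (c + c) c,
      Nat.choose_succ_succ (c + c) (c + 1)]
    push_cast
    ring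
  | succ v hcv ih =>
    rw [sum_Icc_succ_top (by omega), ih, show v + 1 + c = v + c + 1 by omega,
      Nat.choose_succ_succ (v + c + 1) c, Nat.choose_succ_succ (v + c + 1) (v + 2)]
    push_cast
    ring

def ballotNumber (a b : ℕ) : ℚ := (a + b).choose a * ((b : ℚ) - a + 1) / (b + 1)

theorem choose_sub_choose_eq_ballotNumber {c v : ℕ} (hcv : c ≤ v) :
    ((v + c).choose c : ℚ) - (v + c).choose (v + 2) = ballotNumber c (v + 1) := by
  rcases c with _ | c
  · simp [ballotNumber, Nat.choose_eq_zero_of_lt]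
    field_simp
  have h1 := Nat.choose_succ_right_eq (v + (c + 1)) v
  have h2 := Nat.choose_succ_right_eq (v + (c + 1)) (v + 1)
  have h3 := Nat.choose_mul_succ_eq (v + (c + 1)) (c + 1)
  rw [Nat.choose_symm_add, show v + (c + 1) - v = c + 1 by omega] at h1
  rw [show v + (c + 1) - (v + 1) = c by omega] at h2
  rw [show v + (c + 1) + 1 - (c + 1) = v + 1 by omega,
    show v + (c + 1) + 1 = c + 1 + (v + 1) by omega] at h3
  have hv1 : (v : ℚ) + 1 ≠ 0 := by positivity
  rw [ballotNumber, eq_div_iff (by positivity)]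
  apply mul_left_cancel₀ hv1
  qify at h1 h2 h3
  push_cast
  linear_combination (-(v + 1 : ℚ)) * h2 + (v - c + 1 : ℚ) * h3 - c * h1

theorem card_ballotSeqs {N c v : ℕ} (hcv : c ≤ v) (hv : v < N) :
    (#(ballotSeqs N c v) : ℚ) = ballotNumber c (v + 1) := by
  rw [← choose_sub_choose_eq_ballotNumber hcv]
  induction c generalizing v with
  | zero => simp [card_ballotSeqs_zero hv, Nat.choose_eq_zero_of_lt]
  | succ c ih =>
    rw [card_ballotSeqs_succ hcv hv, Nat.cast_sum,
      sum_congr rfl fun u hu => ih (mem_Icc.1 hu).1 ((mem_Icc.1 hu).2.trans_lt hv),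
      sum_Icc_choose_sub_choose (by omega)]
    rfl

section Avoiders

variable {N : ℕ}

theorem isBallotSeq_runningMax (p : Equiv.Perm (Fin N)) : IsBallotSeq (runningMax p) := by
  refine ⟨monotone_runningMax p, fun j => ?_⟩
  have h := card_le_card_of_injOn p (s := Iic j) (t := Iic (runningMax p j))
    (fun i hi => mem_Iic.2 (le_runningMax p (mem_Iic.1 hi))) p.injective.injOn
  simpa using h

theorem Avoids321.lt_of_notMem_jumps {p : Equiv.Perm (Fin N)} (hp : Avoids321 p) {i j : Fin N}
    (hi : i ∉ jumps p) (hij : i < j) : p i < p j := by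
  obtain ⟨g, hgi, hg⟩ : ∃ g < i, p i ≤ p g := by simpa [mem_jumps] using hi
  refine lt_of_not_ge fun hji => hp ⟨g, i, j, hgi, hij, ?_, ?_⟩
  · exact hji.lt_of_ne (p.injective.ne hij.ne')
  · exact hg.lt_of_ne (p.injective.ne hgi.ne')

theorem Avoids321.strictMono_restrict_compl_jumps {p : Equiv.Perm (Fin N)} (hp : Avoids321 p) :
    StrictMono fun j : {j // j ∉ jumps p} => p j :=
  fun i _ hij => hp.lt_of_notMem_jumps i.2 hij

theorem range_restrict_compl_eq_compl_image {α : Type*} (p : Equiv.Perm α) (s : Finset α) :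
    Set.range (fun a : {a // a ∉ s} => p a) = (p '' s)ᶜ := by
  rw [← Set.image_compl_eq p.bijective,
    show (fun a : {a // a ∉ s} => p a) = p ∘ Subtype.val from rfl, Set.range_comp,
    Subtype.range_coe_subtype]
  rfl

theorem Avoids321.eq_of_runningMax_eq {p p' : Equiv.Perm (Fin N)} (hp : Avoids321 p)
    (hp' : Avoids321 p') (h : runningMax p = runningMax p') : p = p' := by
  have hjumps : jumps p' = jumps p := by rw [← jumps_runningMax, ← h, jumps_runningMax]
  have hon : Set.EqOn p p' (jumps p) := fun j hj => by
    have hj' : j ∈ jumps p' := hjumps ▸ hj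
    rw [← runningMax_eq_of_mem_jumps (f := p) hj, ← runningMax_eq_of_mem_jumps (f := p') hj', h]
  have hmono' := hp'.strictMono_restrict_compl_jumps
  rw [hjumps] at hmono'
  have hoff := hp.strictMono_restrict_compl_jumps.range_inj hmono' |>.1 <| by
    rw [range_restrict_compl_eq_compl_image, range_restrict_compl_eq_compl_image, hon.image_eq]
  ext j
  by_cases hj : j ∈ jumps p
  · rw [hon hj]
  · exact congrArg Fin.val (congrFun hoff ⟨j, hj⟩)

end Avoiders

theorem Monotone.card_filter_Iic_jumps {N : ℕ} {q : Fin N → Fin N} (hq : Monotone q) (j : Fin N) :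
    #{y ∈ Iic (q j) | y ∈ (jumps q).image q} = #{i ∈ Iic j | i ∈ jumps q} := by
  have himage : {y ∈ Iic (q j) | y ∈ (jumps q).image q} = {i ∈ Iic j | i ∈ jumps q}.image q := by
    ext y
    simp only [mem_filter, mem_Iic, mem_image]
    constructor
    · rintro ⟨hy, i, hi, rfl⟩
      exact ⟨i, ⟨le_of_not_gt fun hji => (mem_jumps.1 hi j hji).not_ge hy, hi⟩, rfl⟩
    · rintro ⟨i, ⟨hij, hi⟩, rfl⟩
      exact ⟨hq hij, i, hi, rfl⟩
  rw [himage, card_image_of_injOn]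
  exact (strictMonoOn_jumps q).injOn.mono fun i hi => (mem_filter.1 hi).2

section Construction

variable {N : ℕ} (q : Fin N → Fin N)

noncomputable def jumpsEquiv : {j // j ∈ jumps q} ≃ {y // y ∈ (jumps q).image q} :=
  Equiv.ofBijective (fun j => ⟨q j, mem_image_of_mem q j.2⟩)
    ⟨fun i j h => Subtype.ext ((strictMonoOn_jumps q).injOn i.2 j.2 (congrArg Subtype.val h)),
      fun y => by
        obtain ⟨j, hj, hy⟩ := mem_image.1 y.2
        exact ⟨⟨j, hj⟩, Subtype.ext hy⟩⟩

noncomputable def jumpsComplOrderIso : {j // j ∉ jumps q} ≃o {y // y ∉ (jumps q).image q} :=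
  (Fintype.orderIsoFinOfCardEq _ rfl).symm.trans (Fintype.orderIsoFinOfCardEq _ (by
    rw [Fintype.card_subtype_compl, Fintype.card_subtype_compl,
      Fintype.card_congr (jumpsEquiv q)]))

noncomputable def permOfBallotSeq : Equiv.Perm (Fin N) :=
  Equiv.subtypeCongr (jumpsEquiv q) (jumpsComplOrderIso q).toEquiv

theorem permOfBallotSeq_of_mem {j : Fin N} (hj : j ∈ jumps q) : permOfBallotSeq q j = q j := by
  simp [permOfBallotSeq, Equiv.subtypeCongr, hj]
  rfl

theorem permOfBallotSeq_of_notMem {j : Fin N} (hj : j ∉ jumps q) :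
    permOfBallotSeq q j = jumpsComplOrderIso q ⟨j, hj⟩ := by
  simp [permOfBallotSeq, Equiv.subtypeCongr, hj]

variable {q}

/- Let `a` be the number of jumps up to `j`. Below `q j` lie `q j + 1 - a` values outside the image
of `q`, but before `j` there are only `j - a` non-jump positions; as `j ≤ q j`, the increasing
matching of non-jumps with missing values sends `j` below `q j`. -/
theorem permOfBallotSeq_lt (hq : IsBallotSeq q) {j : Fin N} (hj : j ∉ jumps q) :
    permOfBallotSeq q j < q j := by
  rw [permOfBallotSeq_of_notMem q hj]
  by_contra! hle
  have hrank := card_filter_Iio_orderIso (jumpsComplOrderIso q) ⟨j, hj⟩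
  have hmono : #{y ∈ Iio (q j) | y ∉ (jumps q).image q} ≤
      #{y ∈ Iio (jumpsComplOrderIso q ⟨j, hj⟩ : Fin N) | y ∉ (jumps q).image q} :=
    card_le_card (filter_subset_filter _ (Iio_subset_Iio hle))
  have hsplitA := card_filter_add_card_filter_not (s := Iio j) (· ∈ jumps q)
  have hsplitB := card_filter_add_card_filter_not (s := Iio (q j)) (· ∈ (jumps q).image q)
  have hIicA : {i ∈ Iic j | i ∈ jumps q} = {i ∈ Iio j | i ∈ jumps q} := by
    rw [← Iio_insert, filter_insert, if_neg hj]
  have hIicB : #{y ∈ Iic (q j) | y ∈ (jumps q).image q} =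
      #{y ∈ Iio (q j) | y ∈ (jumps q).image q} + 1 := by
    obtain ⟨i, hi, -, hqi⟩ := hq.1.exists_mem_jumps_le_eq j
    rw [← Iio_insert, filter_insert, if_pos (hqi ▸ mem_image_of_mem q hi),
      card_insert_of_notMem (by simp)]
  have hjumps := hq.1.card_filter_Iic_jumps j
  rw [hIicA] at hjumps
  have hjq := hq.2 j
  simp only [Fin.card_Iio] at hsplitA hsplitB hrank
  omega

theorem permOfBallotSeq_le (hq : IsBallotSeq q) (j : Fin N) : permOfBallotSeq q j ≤ q j := by
  by_cases hj : j ∈ jumps q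
  · exact (permOfBallotSeq_of_mem q hj).le
  · exact (permOfBallotSeq_lt hq hj).le

theorem runningMax_permOfBallotSeq (hq : IsBallotSeq q) : runningMax (permOfBallotSeq q) = q := by
  funext j
  refine le_antisymm
    (sup'_le _ _ fun i hi => (permOfBallotSeq_le hq i).trans (hq.1 (mem_Iic.1 hi))) ?_
  obtain ⟨i, hi, hij, hqi⟩ := hq.1.exists_mem_jumps_le_eq j
  rw [← hqi, ← permOfBallotSeq_of_mem q hi]
  exact le_runningMax _ hij

theorem avoids321_permOfBallotSeq (hq : IsBallotSeq q) : Avoids321 (permOfBallotSeq q) := by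
  rintro ⟨i, j, l, hij, hjl, hlj, hji⟩
  have lt_of_mem : ∀ {a b}, a < b → b ∈ jumps q → permOfBallotSeq q a < permOfBallotSeq q b :=
    fun hab hb => (permOfBallotSeq_le hq _).trans_lt
      (permOfBallotSeq_of_mem q hb ▸ mem_jumps.1 hb _ hab)
  have hj : j ∉ jumps q := fun h => (lt_of_mem hij h).not_gt hji
  have hl : l ∉ jumps q := fun h => (lt_of_mem hjl h).not_gt hlj
  rw [permOfBallotSeq_of_notMem q hj, permOfBallotSeq_of_notMem q hl] at hlj
  exact hlj.not_gt (Subtype.coe_lt_coe.2 ((jumpsComplOrderIso q).strictMono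
    (Subtype.mk_lt_mk.2 hjl)))

end Construction

def IsWinning {n : ℕ} (K : Fin (n + 1)) (q : Fin (n + 1) → Fin (n + 1)) : Prop :=
  q K < Fin.last n ∧ ∀ j, K ≤ j → q j = q K ∨ q j = Fin.last n

theorem winnable_iff_isWinning_runningMax {n : ℕ} (K : Fin (n + 1))
    (p : Equiv.Perm (Fin (n + 1))) :
    Winnable (n + 1) (K + 1) p ↔ IsWinning K (runningMax p) := by
  have isLTRMax_iff {j : Fin (n + 1)} : IsLTRMax p j ↔ j ∈ jumps p := mem_jumps.symm
  have last_iff {j : Fin (n + 1)} : (p j : ℕ) = n + 1 - 1 ↔ p j = Fin.last n := by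
    simp [Fin.ext_iff]
  simp only [Winnable, isLTRMax_iff, last_iff, Nat.add_one_le_iff, ← Fin.lt_def]
  constructor
  · rintro ⟨j₀, hKj₀, -, hmin, htop⟩
    refine ⟨Fin.lt_last_iff_ne_last.2 fun h => ?_, fun j hKj => ?_⟩
    · obtain ⟨i, hiK, hi⟩ := exists_le_runningMax_eq p K
      exact (hiK.trans_lt hKj₀).ne (p.injective (hi.trans (h.trans htop.symm)))
    · rcases le_or_gt j₀ j with hj | hj
      · exact .inr (le_antisymm (Fin.le_last _) (htop ▸ le_runningMax p hj))
      · obtain ⟨i, hi, hij, hpi⟩ := exists_mem_jumps_le_runningMax_eq p j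
        have hiK : i ≤ K := le_of_not_gt fun hKi => (hmin i hKi hi).not_gt (hij.trans_lt hj)
        exact .inl (le_antisymm (hpi ▸ le_runningMax p hiK) (monotone_runningMax p hKj))
  · rintro ⟨hK, hwin⟩
    have hpj₀ : p (p.symm (Fin.last n)) = Fin.last n := p.apply_symm_apply _
    have hlt {i : Fin (n + 1)} (hi : i ≠ p.symm (Fin.last n)) : p i < Fin.last n :=
      Fin.lt_last_iff_ne_last.2 fun h => hi (p.injective (h.trans hpj₀.symm))
    refine ⟨p.symm (Fin.last n), lt_of_not_ge fun h => ?_,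
      mem_jumps.2 fun i hi => hpj₀.symm ▸ hlt hi.ne,
      fun i hKi hi => le_of_not_gt fun hij => ?_, hpj₀⟩
    · exact hK.not_ge (hpj₀ ▸ le_runningMax p h)
    · rcases hwin i hKi.le with h | h
      · obtain ⟨i', hi'K, hi'⟩ := exists_le_runningMax_eq p K
        rw [runningMax_eq_of_mem_jumps hi, ← hi'] at h
        exact hKi.not_ge (p.injective h ▸ hi'K)
      · rw [runningMax_eq_of_mem_jumps hi] at h
        exact (hlt hij.ne).ne h

instance {n : ℕ} (K : Fin (n + 1)) : DecidablePred (IsWinning K) := fun _ => by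
  unfold IsWinning; infer_instance

theorem winCount_eq_card_isWinning {n : ℕ} (K : Fin (n + 1)) :
    winCount (n + 1) (K + 1) =
      #{q : Fin (n + 1) → Fin (n + 1) | IsBallotSeq q ∧ IsWinning K q} := by
  rw [winCount, ← Fintype.card_coe, ← Nat.card_eq_fintype_card]
  refine Nat.card_congr (Equiv.ofBijective (fun p => ⟨runningMax p.1, mem_filter.2
    ⟨mem_univ _, isBallotSeq_runningMax _, (winnable_iff_isWinning_runningMax K p.1).1 p.2.2⟩⟩)
    ⟨fun p p' h => Subtype.ext (p.2.1.eq_of_runningMax_eq p'.2.1 (congrArg Subtype.val h)),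
      fun q => ?_⟩)
  obtain ⟨hq, hwin⟩ := (mem_filter.1 q.2).2
  refine ⟨⟨permOfBallotSeq q, avoids321_permOfBallotSeq hq, ?_⟩,
    Subtype.ext (runningMax_permOfBallotSeq hq)⟩
  rwa [winnable_iff_isWinning_runningMax, runningMax_permOfBallotSeq hq]

section Winning

variable {n : ℕ} (K : Fin (n + 1))

/- A winning sequence is determined by its prefix up to `K` and by the number `m` of positions where
it is below the top: it keeps the value at `K` up to position `m - 1`. -/
def winningSeqOf (f : Fin (K + 1) → Fin (n + 1)) (m : ℕ) (j : Fin (n + 1)) : Fin (n + 1) :=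
  if h : j ≤ K then f ⟨j, Nat.lt_succ_of_le h⟩
  else if (j : ℕ) < m then f (Fin.last K) else Fin.last n

def prefixUpTo (q : Fin (n + 1) → Fin (n + 1)) (i : Fin (K + 1)) : Fin (n + 1) :=
  q (Fin.castLE K.isLt i)

variable {K}

theorem winningSeqOf_spec {v : ℕ} (hv : v < n) {f : Fin (K + 1) → Fin (n + 1)} {m : ℕ}
    (hf : f ∈ ballotSeqs (n + 1) K v) (hm : m ∈ Ioc (K : ℕ) (v + 1)) :
    (IsBallotSeq (winningSeqOf K f m) ∧ IsWinning K (winningSeqOf K f m)) ∧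
      (winningSeqOf K f m K : ℕ) = v := by
  obtain ⟨⟨hmono, hge⟩, hlast⟩ := (mem_filter.1 hf).2
  obtain ⟨hKm, hmv⟩ := mem_Ioc.1 hm
  have hle_last (i) : f i ≤ f (Fin.last K) := hmono (Fin.le_last i)
  have hK : winningSeqOf K f m K = f (Fin.last K) := by simp [winningSeqOf]; rfl
  simp only [IsBallotSeq, IsWinning, hK, hlast, and_true]
  refine ⟨⟨fun a b hab => ?_, fun j => ?_⟩, Fin.lt_last_iff_ne_last.2 ?_, fun j hj => ?_⟩
  · simp only [winningSeqOf]
    split_ifs <;> first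
      | exact hmono hab | exact hle_last _ | exact le_rfl | exact Fin.le_last _
      | (exfalso; omega)
  · simp only [winningSeqOf]
    split_ifs with h h'
    · exact hge ⟨j, _⟩
    · omega
    · exact Fin.le_last j
  · intro h
    rw [Fin.ext_iff, hlast, Fin.val_last] at h
    omega
  · simp only [winningSeqOf]
    split_ifs with h h'
    · exact .inl (congrArg f (Fin.ext (le_antisymm h hj)))
    · exact .inl rfl
    · exact .inr rfl

theorem prefixUpTo_mem_ballotSeqs {q : Fin (n + 1) → Fin (n + 1)} (hq : IsBallotSeq q) :
    prefixUpTo K q ∈ ballotSeqs (n + 1) K (q K) :=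
  mem_filter.2 ⟨mem_univ _, ⟨fun _ _ hab => hq.1 hab, fun i => hq.2 (Fin.castLE _ i)⟩, rfl⟩

theorem card_lt_last_mem_Ioc {q : Fin (n + 1) → Fin (n + 1)} (hq : IsBallotSeq q)
    (hw : IsWinning K q) : #{j | q j < Fin.last n} ∈ Ioc (K : ℕ) (q K + 1) := by
  refine mem_Ioc.2 ⟨(hq.1.lt_card_filter_lt_iff _ K).2 hw.1, le_of_not_gt fun hlt => ?_⟩
  let j : Fin (n + 1) := ⟨q K + 1, Nat.succ_lt_succ hw.1⟩
  rcases hw.2 j (Nat.le_succ_of_le (hq.2 K)) with h | h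
  · exact (hq.2 j).not_gt (h ▸ Nat.lt_succ_self _)
  · exact ((hq.1.lt_card_filter_lt_iff _ j).1 hlt).ne h

theorem prefixUpTo_winningSeqOf (f : Fin (K + 1) → Fin (n + 1)) (m : ℕ) :
    prefixUpTo K (winningSeqOf K f m) = f := by
  funext i
  have hi : Fin.castLE K.isLt i ≤ K := Nat.lt_succ_iff.1 i.isLt
  simp only [prefixUpTo, winningSeqOf, dif_pos hi]
  rfl

theorem card_winningSeqOf_lt_last {v : ℕ} (hv : v < n) {f : Fin (K + 1) → Fin (n + 1)} {m : ℕ}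
    (hf : f ∈ ballotSeqs (n + 1) K v) (hm : m ∈ Ioc (K : ℕ) (v + 1)) :
    #{j | winningSeqOf K f m j < Fin.last n} = m := by
  obtain ⟨⟨hmono, -⟩, hlast⟩ := (mem_filter.1 hf).2
  obtain ⟨hKm, hmv⟩ := mem_Ioc.1 hm
  have hf_lt (i) : f i < Fin.last n :=
    (hmono (Fin.le_last i)).trans_lt (by rw [Fin.lt_def, hlast, Fin.val_last]; exact hv)
  have hiff (j : Fin (n + 1)) : winningSeqOf K f m j < Fin.last n ↔ (j : ℕ) < m := by
    simp only [winningSeqOf]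
    split_ifs with h h'
    · exact iff_of_true (hf_lt _) (by rw [Fin.le_def] at h; omega)
    · exact iff_of_true (hf_lt _) h'
    · exact iff_of_false (lt_irrefl _) h'
  rw [filter_congr fun j _ => hiff j, Fin.card_filter_val_lt]
  omega

theorem winningSeqOf_prefixUpTo {q : Fin (n + 1) → Fin (n + 1)} (hq : IsBallotSeq q)
    (hw : IsWinning K q) : winningSeqOf K (prefixUpTo K q) #{j | q j < Fin.last n} = q := by
  funext j
  simp only [winningSeqOf, prefixUpTo]
  split_ifs with h h'
  · rfl
  · rcases hw.2 j (lt_of_not_ge h).le with e | e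
    · exact e.symm
    · exact absurd e ((hq.1.lt_card_filter_lt_iff _ j).1 h').ne
  · exact (le_antisymm (Fin.le_last _) (not_lt.1 (mt (hq.1.lt_card_filter_lt_iff _ j).2 h'))).symm

theorem card_isWinning_fiber {v : ℕ} (hv : v < n) :
    #{q | (IsBallotSeq q ∧ IsWinning K q) ∧ (q K : ℕ) = v} =
      #(ballotSeqs (n + 1) K v) * (v + 1 - K) := by
  rw [← Nat.card_Ioc, ← card_product]
  refine card_nbij' (fun q => (prefixUpTo K q, #{j | q j < Fin.last n}))
    (fun x => winningSeqOf K x.1 x.2) (fun q hq => ?_) (fun x hx => ?_) (fun q hq => ?_)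
    (fun x hx => ?_)
  · obtain ⟨⟨hb, hw⟩, rfl⟩ := (mem_filter.1 hq).2
    exact mem_product.2 ⟨prefixUpTo_mem_ballotSeqs hb, card_lt_last_mem_Ioc hb hw⟩
  · obtain ⟨hf, hm⟩ := mem_product.1 hx
    exact mem_filter.2 ⟨mem_univ _, winningSeqOf_spec hv hf hm⟩
  · obtain ⟨⟨hb, hw⟩, -⟩ := (mem_filter.1 hq).2
    exact winningSeqOf_prefixUpTo hb hw
  · obtain ⟨hf, hm⟩ := mem_product.1 hx
    exact Prod.ext (prefixUpTo_winningSeqOf x.1 x.2) (card_winningSeqOf_lt_last hv hf hm)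

theorem card_isWinning :
    #{q | IsBallotSeq q ∧ IsWinning K q} =
      ∑ v ∈ Ico (K : ℕ) n, #(ballotSeqs (n + 1) K v) * (v + 1 - K) := by
  rw [card_eq_sum_card_fiberwise (f := fun q => (q K : ℕ)) (t := Ico (K : ℕ) n) fun q hq => ?_]
  · refine sum_congr rfl fun v hv => ?_
    rw [filter_filter]
    exact card_isWinning_fiber (mem_Ico.1 hv).2
  · obtain ⟨hb, hw⟩ := (mem_filter.1 hq).2
    exact mem_Ico.2 ⟨hb.2 K, hw.1⟩

end Winning

/-- The number of 321-avoiding `k`-winnable permutations of size `N` equals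
`∑_{i=1}^{N-k} binom((k-1)+(N-i), k-1) · ((N-k-i+2)/((N-i)+1)) · (N-k-i+1)`. -/
theorem winCount_formula (N k : ℕ) (hk : 1 ≤ k) (hkN : k ≤ N - 1) :
    (winCount N k : ℚ) =
      ∑ i ∈ Finset.Icc 1 (N - k),
        (Nat.choose ((k - 1) + (N - i)) (k - 1) : ℚ) *
          (((N - k - i + 2 : ℕ) : ℚ) / (((N - i) + 1 : ℕ) : ℚ)) *
          ((N - k - i + 1 : ℕ) : ℚ) := by
  obtain ⟨n, rfl⟩ : ∃ n, N = n + 1 := ⟨N - 1, by omega⟩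
  obtain ⟨K, rfl⟩ : ∃ K : Fin (n + 1), k = K + 1 := ⟨⟨k - 1, by omega⟩, by simp; omega⟩
  rw [winCount_eq_card_isWinning, card_isWinning, Nat.cast_sum]
  -- the formula's index `i` is `n - v`, where `v` is the value of the running maximum at `k - 1`
  refine sum_nbij' (fun v => n - v) (fun i => n - i) ?_ ?_ ?_ ?_ fun v hv => ?_
  any_goals
    intro x hx
    simp only [mem_Icc, mem_Ico] at hx ⊢
    omega
  obtain ⟨hKv, hvn⟩ := mem_Ico.1 hv
  rw [Nat.cast_mul, card_ballotSeqs hKv (by omega), ballotNumber,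
    show (K : ℕ) + 1 - 1 + (n + 1 - (n - v)) = K + (v + 1) by omega,
    show n + 1 - (K + 1) - (n - v) + 2 = v - K + 2 by omega,
    show n + 1 - (n - v) + 1 = v + 1 + 1 by omega,
    show n + 1 - (K + 1) - (n - v) + 1 = v + 1 - K by omega, Nat.add_sub_cancel]
  push_cast [hKv, hKv.trans (Nat.le_succ v)]
  ring
end
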